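/- arXiv:1808.06033 — 9 statements merged into one kernel-verified Lean document; each statement's English description precedes it below -/
import Mathlib

section
/- Let A be a left-symmetric conformal algebra, i.e. a C[∂]-module with a C-bilinear λ-product a_λ b satisfying (∂a)_λ b = -λ a_λ b, a_λ(∂b) = (∂+λ) a_λ b, and the left-symmetry identity (a_λ b)_{λ+μ} c - a_λ(b_μ c) = (b_μ a)_{λ+μ} c - b_μ(a_λ c). Then the λ-bracket [a_λ b] := a_λ b - b_{-λ-∂} a defines a Lie conformal algebra structure on A (i.e. it satisfies conformal sesquilinearity, skew-symmetry [a_λ b] = -[b_{-λ-∂} a], and the Jacobi identity [a_λ[b_μ c]] = [[a_λ b]_{λ+μ} c] + [b_μ[a_λ c]]). -/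
open Finsupp

noncomputable section

/-- Coefficient of `λ^k` of the substitution `μ ↦ -λ-∂` applied to the polynomial
`Σₙ μ^n • (f n)` with coefficients in `A` (with `∂` acting on the coefficients). -/
def csubst {A : Type} [AddCommGroup A] [Module ℂ A]
    (D : Module.End ℂ A) (f : ℕ →₀ A) (k : ℕ) : A :=
  f.sum fun n c => ((-1 : ℂ) ^ n * (n.choose k : ℂ)) • (D ^ (n - k)) c

/-- Coefficient of `λ^n μ^m` of `(a_λ b)_{λ+μ} c`, for a λ-product `m₁` on `A`
and a λ-action `m₂` of `A` on `V`. -/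
def comp2 {A V : Type} [AddCommGroup A] [Module ℂ A] [AddCommGroup V] [Module ℂ V]
    (m₁ : A →ₗ[ℂ] A →ₗ[ℂ] (ℕ →₀ A)) (m₂ : A →ₗ[ℂ] V →ₗ[ℂ] (ℕ →₀ V))
    (a b : A) (c : V) (n m : ℕ) : V :=
  ∑ i ∈ Finset.range (n + 1),
    (((m + n - i).choose (n - i) : ℕ) : ℂ) • m₂ (m₁ a b i) c (m + n - i)

/-- A conformal algebra: a `ℂ[∂]`-module with a sesquilinear λ-product,
encoded coefficientwise: `mul a b n` is the coefficient of `λ^n` in `a_λ b`. -/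
structure ConfAlg (A : Type) [AddCommGroup A] [Module ℂ A] where
  D : Module.End ℂ A
  mul : A →ₗ[ℂ] A →ₗ[ℂ] (ℕ →₀ A)
  sesq_left_zero : ∀ a b, mul (D a) b 0 = 0
  sesq_left : ∀ a b n, mul (D a) b (n + 1) = - mul a b n
  sesq_right_zero : ∀ a b, mul a (D b) 0 = D (mul a b 0)
  sesq_right : ∀ a b n, mul a (D b) (n + 1) = D (mul a b (n + 1)) + mul a b n

/-- A Lie conformal algebra: skew-symmetry `[a_λ b] = -[b_{-λ-∂} a]` and the
Jacobi identity `[a_λ[b_μ c]] = [[a_λ b]_{λ+μ} c] + [b_μ[a_λ c]]`, coefficientwise. -/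
structure LieConfAlg (A : Type) [AddCommGroup A] [Module ℂ A] extends ConfAlg A where
  skew : ∀ a b k, mul a b k = - csubst D (mul b a) k
  jacobi : ∀ a b c n m,
    mul a (mul b c m) n = comp2 mul mul a b c n m + mul b (mul a c n) m

/-- A left-symmetric conformal algebra:
`(a_λ b)_{λ+μ} c - a_λ(b_μ c) = (b_μ a)_{λ+μ} c - b_μ(a_λ c)`, coefficientwise. -/
structure LSConfAlg (A : Type) [AddCommGroup A] [Module ℂ A] extends ConfAlg A where
  lsym : ∀ a b c n m,
    comp2 mul mul a b c n m - mul a (mul b c m) n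
      = comp2 mul mul b a c m n - mul b (mul a c n) m

/-!
The λ-products are encoded as polynomial-valued maps, and every substitution that occurs
(`λ ↦ -λ-∂`, `(λ, μ) ↦ (μ, -λ-μ-∂)`, …) as the evaluation of polynomials at commuting operators.
Since `A[x]` is free over `ℂ[x]`, a linear map out of it is determined by the operator it
intertwines with multiplication by `x` and by its values on constants (`eq_polyEval`); this turns
each identity between substituted λ-products into the check of these two pieces of data, where
sesquilinearity enters.

Skew-symmetry of `[a_λ b] = a_λ b - b_{-λ-∂} a` holds because `λ ↦ -λ-∂` is an involution.
Expanding `[a_λ [b_μ c]] - [[a_λ b]_{λ+μ} c] - [b_μ [a_λ c]]` gives twelve terms, which cancel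
against three instances of left-symmetry: the one for `(a, b, c)`, and those for `(b, c, a)` and
`(a, c, b)` after the substitutions `(λ, μ) ↦ (μ, -λ-μ-∂)` and `(λ, μ) ↦ (λ, -λ-μ-∂)`.
-/

namespace LambdaPoly

section PolyEval

variable {M N : Type*} [AddCommGroup M] [Module ℂ M] [AddCommGroup N] [Module ℂ N]

def mulX : Module.End ℂ (ℕ →₀ M) := lmapDomain M ℂ Nat.succ

@[simp]
lemma mulX_single (n : ℕ) (c : M) : mulX (single n c) = single (n + 1) c := by
  simp [mulX, mapDomain_single]

lemma mulX_apply_zero (f : ℕ →₀ M) : mulX f 0 = 0 :=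
  mapDomain_of_notMem_range _ _ fun ⟨_, h⟩ => Nat.succ_ne_zero _ h

lemma mulX_apply_succ (f : ℕ →₀ M) (n : ℕ) : mulX f (n + 1) = f n :=
  mapDomain_apply Nat.succ_injective f n

lemma mulX_pow_single (i n : ℕ) (c : M) : (mulX ^ i) (single n c) = single (n + i) c := by
  induction i with
  | zero => simp
  | succ i ih => rw [pow_succ', Module.End.mul_apply, ih, mulX_single, add_assoc]

lemma mulX_pow_apply (i : ℕ) (f : ℕ →₀ M) (n : ℕ) :
    (mulX ^ i) f n = if i ≤ n then f (n - i) else 0 := by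
  induction f using induction_linear with
  | zero => simp
  | add f g hf hg => simp only [map_add, Finsupp.add_apply, hf, hg]; split_ifs <;> simp
  | single j c =>
    simp only [mulX_pow_single, single_apply]
    split_ifs <;> first | rfl | omega

lemma mapRange_mulX (φ : M →ₗ[ℂ] N) (f : ℕ →₀ M) :
    mapRange.linearMap φ (mulX f) = mulX (mapRange.linearMap φ f) := by
  induction f using induction_linear with
  | zero => simp
  | add f g hf hg => simp only [map_add, hf, hg]
  | single n c => simp

lemma commute_mulX_mapRange (φ : Module.End ℂ M) :
    Commute (mulX : Module.End ℂ (ℕ →₀ M)) (mapRange.linearMap φ) :=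
  LinearMap.ext fun f => (mapRange_mulX φ f).symm

lemma mapRange_pow (φ : Module.End ℂ M) (i : ℕ) :
    (mapRange.linearMap φ : Module.End ℂ (ℕ →₀ M)) ^ i = mapRange.linearMap (φ ^ i) := by
  induction i with
  | zero => ext; simp
  | succ i ih => ext; simp [pow_succ', Module.End.mul_apply, ih]

lemma apply_comm_of_commute {E F : Module.End ℂ N} (h : Commute E F) (x : N) :
    E (F x) = F (E x) :=
  LinearMap.congr_fun h.eq x

lemma add_pow_apply {E F : Module.End ℂ N} (h : Commute E F) (n : ℕ) (v : N) :
    ((E + F) ^ n) v =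
      ∑ i ∈ Finset.range (n + 1), (n.choose i : ℂ) • (E ^ i) ((F ^ (n - i)) v) := by
  simp [h.add_pow, LinearMap.sum_apply, Module.End.mul_apply, Module.End.natCast_apply,
    Nat.cast_smul_eq_nsmul]

def polyEval (E : Module.End ℂ N) (ι : M →ₗ[ℂ] N) : (ℕ →₀ M) →ₗ[ℂ] N :=
  lsum ℂ fun n => (E ^ n) ∘ₗ ι

variable (E : Module.End ℂ N) (ι : M →ₗ[ℂ] N)

@[simp]
lemma polyEval_single (n : ℕ) (c : M) : polyEval E ι (single n c) = (E ^ n) (ι c) := by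
  simp [polyEval]

lemma polyEval_mulX (f : ℕ →₀ M) : polyEval E ι (mulX f) = E (polyEval E ι f) := by
  induction f using induction_linear with
  | zero => simp
  | add f g hf hg => simp only [map_add, hf, hg]
  | single n c => simp [pow_succ', Module.End.mul_apply]

lemma polyEval_sub (ι' : M →ₗ[ℂ] N) (f : ℕ →₀ M) :
    polyEval E (ι - ι') f = polyEval E ι f - polyEval E ι' f := by
  induction f using induction_linear with
  | zero => simp
  | add f g hf hg => simp only [map_add, hf, hg]; abel
  | single n c => simp

theorem eq_polyEval {Φ : (ℕ →₀ M) →ₗ[ℂ] N} (hX : ∀ f, Φ (mulX f) = E (Φ f))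
    (hC : ∀ c, Φ (single 0 c) = ι c) (f : ℕ →₀ M) : Φ f = polyEval E ι f := by
  suffices Φ = polyEval E ι from LinearMap.congr_fun this f
  refine lhom_ext fun n c => ?_
  induction n with
  | zero => simp [hC]
  | succ n ih => rw [← mulX_single, hX, ih, polyEval_mulX]

theorem eq_of_comm_mulX {Φ Ψ : (ℕ →₀ M) →ₗ[ℂ] N} (hΦ : ∀ f, Φ (mulX f) = E (Φ f))
    (hΨ : ∀ f, Ψ (mulX f) = E (Ψ f)) (hC : ∀ c, Φ (single 0 c) = Ψ (single 0 c))
    (f : ℕ →₀ M) : Φ f = Ψ f :=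
  (eq_polyEval E (Ψ ∘ₗ lsingle 0) hΦ hC f).trans
    (eq_polyEval E (Ψ ∘ₗ lsingle 0) hΨ (fun _ => rfl) f).symm

end PolyEval

section OneVariable

variable {A : Type} [AddCommGroup A] [Module ℂ A] (D : Module.End ℂ A)

def negXD : Module.End ℂ (ℕ →₀ A) := -(mulX + mapRange.linearMap D)

/-- `f(x) ↦ f(-x-∂)`. -/
def negSubst : Module.End ℂ (ℕ →₀ A) := polyEval (negXD D) (lsingle 0)

@[simp]
lemma negSubst_single_zero (c : A) : negSubst D (single 0 c) = single 0 c := by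
  simp [negSubst]

lemma negSubst_mulX (f : ℕ →₀ A) : negSubst D (mulX f) = negXD D (negSubst D f) :=
  polyEval_mulX _ _ f

lemma negSubst_mapRange (f : ℕ →₀ A) :
    negSubst D (mapRange.linearMap D f) = mapRange.linearMap D (negSubst D f) :=
  eq_of_comm_mulX (negXD D) (Φ := negSubst D ∘ₗ mapRange.linearMap D)
    (Ψ := mapRange.linearMap D ∘ₗ negSubst D)
    (fun f => by simp only [LinearMap.comp_apply, mapRange_mulX, negSubst_mulX])
    (fun f => by
      simp only [LinearMap.comp_apply, negSubst_mulX, negXD, LinearMap.neg_apply,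
        LinearMap.add_apply, map_neg, map_add, mapRange_mulX])
    (fun c => by simp) f

lemma negSubst_negXD (f : ℕ →₀ A) : negSubst D (negXD D f) = mulX (negSubst D f) := by
  simp only [negXD, LinearMap.neg_apply, LinearMap.add_apply, map_neg, map_add, negSubst_mulX,
    negSubst_mapRange]
  abel

lemma negSubst_negSubst (f : ℕ →₀ A) : negSubst D (negSubst D f) = f :=
  eq_of_comm_mulX mulX (Φ := negSubst D ∘ₗ negSubst D) (Ψ := LinearMap.id)
    (fun f => by simp only [LinearMap.comp_apply, negSubst_mulX, negSubst_negXD])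
    (fun _ => rfl) (fun c => by simp) f

lemma negXD_pow_single_zero_apply (n : ℕ) (c : A) (k : ℕ) :
    ((negXD D) ^ n) (single 0 c) k = ((-1 : ℂ) ^ n * (n.choose k : ℂ)) • (D ^ (n - k)) c := by
  rw [negXD, ← neg_one_smul ℂ (mulX + _), smul_pow, LinearMap.smul_apply,
    add_pow_apply (commute_mulX_mapRange D), Finsupp.smul_apply, finsetSum_apply]
  simp only [mapRange_pow, mapRange.linearMap_apply, mapRange_single, mulX_pow_single, zero_add,
    Finsupp.smul_apply, single_apply, smul_ite, smul_zero, Finset.sum_ite_eq', Finset.mem_range,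
    mul_smul]
  split_ifs with hk
  · rfl
  · rw [Nat.choose_eq_zero_of_lt (by omega)]
    simp

lemma csubst_eq_negSubst (f : ℕ →₀ A) (k : ℕ) : csubst D f k = negSubst D f k := by
  simp only [csubst, negSubst, polyEval, lsum_apply, Finsupp.sum_apply, LinearMap.comp_apply,
    lsingle_apply, negXD_pow_single_zero_apply]

end OneVariable

section TwoVariables

-- A polynomial `p(λ, μ)` is `p : ℕ →₀ ℕ →₀ A` with `p n m` the coefficient of `λⁿ μᵐ`.

variable {A : Type} [AddCommGroup A] [Module ℂ A] (D : Module.End ℂ A)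

def mulX₂ : Module.End ℂ (ℕ →₀ ℕ →₀ A) := mapRange.linearMap mulX

def diff₂ : Module.End ℂ (ℕ →₀ ℕ →₀ A) := mapRange.linearMap (mapRange.linearMap D)

def negAll : Module.End ℂ (ℕ →₀ ℕ →₀ A) := -(mulX + mulX₂ + diff₂ D)

def const₂ : A →ₗ[ℂ] (ℕ →₀ ℕ →₀ A) := lsingle 0 ∘ₗ lsingle 0

def subst₁ (F : Module.End ℂ (ℕ →₀ ℕ →₀ A)) : (ℕ →₀ A) →ₗ[ℂ] (ℕ →₀ ℕ →₀ A) :=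
  polyEval F const₂

/-- `p(λ, μ) ↦ p(E, F)`. -/
def subst₂ (E F : Module.End ℂ (ℕ →₀ ℕ →₀ A)) : Module.End ℂ (ℕ →₀ ℕ →₀ A) :=
  polyEval E (subst₁ F)

abbrev swap : Module.End ℂ (ℕ →₀ ℕ →₀ A) := subst₂ mulX₂ mulX

lemma commute_mulX_mulX₂ : Commute (mulX : Module.End ℂ (ℕ →₀ ℕ →₀ A)) mulX₂ :=
  commute_mulX_mapRange mulX

lemma commute_mulX_diff₂ : Commute (mulX : Module.End ℂ (ℕ →₀ ℕ →₀ A)) (diff₂ D) :=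
  commute_mulX_mapRange _

lemma commute_mulX₂_diff₂ : Commute (mulX₂ : Module.End ℂ (ℕ →₀ ℕ →₀ A)) (diff₂ D) :=
  LinearMap.ext fun p => by
    ext n : 1
    simp only [mulX₂, diff₂, Module.End.mul_apply, mapRange.linearMap_apply, mapRange_apply]
    exact (mapRange_mulX D (p n)).symm

lemma commute_mulX_negAll : Commute (mulX : Module.End ℂ (ℕ →₀ ℕ →₀ A)) (negAll D) :=
  (((Commute.refl _).add_right commute_mulX_mulX₂).add_right (commute_mulX_diff₂ D)).neg_right

lemma commute_mulX₂_negAll : Commute (mulX₂ : Module.End ℂ (ℕ →₀ ℕ →₀ A)) (negAll D) :=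
  ((commute_mulX_mulX₂.symm.add_right (Commute.refl _)).add_right
    (commute_mulX₂_diff₂ D)).neg_right

lemma mulX₂_add_negAll : mulX₂ + negAll D = -(mulX + diff₂ D) := by
  rw [negAll]; abel

lemma mulX_add_negAll : mulX + negAll D = -(mulX₂ + diff₂ D) := by
  rw [negAll]; abel

lemma const₂_apply (c : A) : const₂ c = single 0 (single 0 c) := rfl

lemma diff₂_single (n : ℕ) (g : ℕ →₀ A) :
    diff₂ D (single n g) = single n (mapRange.linearMap D g) := by
  simp [diff₂]

lemma diff₂_const₂ (c : A) : diff₂ D (const₂ c) = const₂ (D c) := by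
  simp [diff₂, const₂]

variable {D} {E F G G' : Module.End ℂ (ℕ →₀ ℕ →₀ A)}

@[simp]
lemma subst₁_single_zero (c : A) : subst₁ F (single 0 c) = const₂ c := by
  simp [subst₁]

lemma subst₁_mulX (g : ℕ →₀ A) : subst₁ F (mulX g) = F (subst₁ F g) :=
  polyEval_mulX _ _ g

lemma subst₁_mapRange (hF : Commute F (diff₂ D)) (g : ℕ →₀ A) :
    subst₁ F (mapRange.linearMap D g) = diff₂ D (subst₁ F g) :=
  eq_of_comm_mulX F (Φ := subst₁ F ∘ₗ mapRange.linearMap D) (Ψ := diff₂ D ∘ₗ subst₁ F)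
    (fun g => by simp only [LinearMap.comp_apply, mapRange_mulX, subst₁_mulX])
    (fun g => by simp only [LinearMap.comp_apply, subst₁_mulX, apply_comm_of_commute hF])
    (fun c => by simp [diff₂_const₂]) g

lemma subst₁_negSubst (hF : Commute F (diff₂ D)) (g : ℕ →₀ A) :
    subst₁ F (negSubst D g) = subst₁ (-(F + diff₂ D)) g :=
  eq_polyEval _ _ (Φ := subst₁ F ∘ₗ negSubst D)
    (fun g => by
      simp only [LinearMap.comp_apply, negSubst_mulX, negXD, LinearMap.neg_apply,
        LinearMap.add_apply, map_neg, map_add, subst₁_mulX, subst₁_mapRange hF])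
    (fun c => by simp) g

lemma subst₁_mulX_apply (g : ℕ →₀ A) (n : ℕ) : subst₁ mulX g n = single 0 (g n) := by
  have : subst₁ mulX g = mapRange.linearMap (lsingle 0) g :=
    (eq_polyEval mulX const₂ (Φ := mapRange.linearMap (lsingle 0 : A →ₗ[ℂ] ℕ →₀ A))
      (mapRange_mulX _) (fun c => by simp [const₂_apply]) g).symm
  simp [this]

lemma subst₁_add_apply (g : ℕ →₀ A) (n m : ℕ) :
    subst₁ (mulX + mulX₂) g n m = ((n + m).choose n : ℂ) • g (n + m) := by
  induction g using induction_linear with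
  | zero => simp
  | add f g hf hg => simp only [map_add, Finsupp.add_apply, hf, hg, smul_add]
  | single j e =>
    rw [subst₁, polyEval_single, add_pow_apply (commute_mulX_mulX₂ (A := A)), const₂_apply]
    simp only [mulX₂, mapRange_pow, mapRange.linearMap_apply, mapRange_single, mulX_pow_single,
      zero_add, finsetSum_apply, Finsupp.smul_apply, single_apply, smul_ite, smul_zero,
      Finset.sum_ite_eq', Finset.mem_range]
    split_ifs with h₁ h₂ h₂
    · subst h₂; simp
    · simp [single_apply]; omega
    · omega
    · rfl

variable (E F) in
@[simp]
lemma subst₂_single_zero (g : ℕ →₀ A) : subst₂ E F (single 0 g) = subst₁ F g := by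
  simp [subst₂]

variable (E F) in
@[simp]
lemma subst₂_const₂ (c : A) : subst₂ E F (const₂ c) = const₂ c := by
  simp [const₂]

variable (E F) in
lemma subst₂_mulX (p : ℕ →₀ ℕ →₀ A) : subst₂ E F (mulX p) = E (subst₂ E F p) :=
  polyEval_mulX _ _ p

lemma subst₂_mulX₂ (hEF : Commute E F) (p : ℕ →₀ ℕ →₀ A) :
    subst₂ E F (mulX₂ p) = F (subst₂ E F p) :=
  eq_of_comm_mulX E (Φ := subst₂ E F ∘ₗ mulX₂) (Ψ := F ∘ₗ subst₂ E F)
    (fun p => by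
      simp only [LinearMap.comp_apply, ← apply_comm_of_commute (commute_mulX_mulX₂ (A := A)),
        subst₂_mulX])
    (fun p => by simp only [LinearMap.comp_apply, subst₂_mulX, apply_comm_of_commute hEF])
    (fun g => by simp [mulX₂, subst₁_mulX]) p

lemma subst₂_diff₂ (hE : Commute E (diff₂ D)) (hF : Commute F (diff₂ D)) (p : ℕ →₀ ℕ →₀ A) :
    subst₂ E F (diff₂ D p) = diff₂ D (subst₂ E F p) :=
  eq_of_comm_mulX E (Φ := subst₂ E F ∘ₗ diff₂ D) (Ψ := diff₂ D ∘ₗ subst₂ E F)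
    (fun p => by
      simp only [LinearMap.comp_apply, ← apply_comm_of_commute (commute_mulX_diff₂ D),
        subst₂_mulX])
    (fun p => by simp only [LinearMap.comp_apply, subst₂_mulX, apply_comm_of_commute hE])
    (fun g => by
      simp only [LinearMap.comp_apply, diff₂_single, subst₂_single_zero, subst₁_mapRange hF]) p

lemma subst₂_negAll (hEF : Commute E F) (hE : Commute E (diff₂ D)) (hF : Commute F (diff₂ D))
    (p : ℕ →₀ ℕ →₀ A) :
    subst₂ E F (negAll D p) =
      -(E (subst₂ E F p) + F (subst₂ E F p) + diff₂ D (subst₂ E F p)) := by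
  simp only [negAll, LinearMap.neg_apply, LinearMap.add_apply, map_neg, map_add, subst₂_mulX,
    subst₂_mulX₂ hEF, subst₂_diff₂ hE hF]

lemma subst₂_subst₁ (hG : ∀ p, subst₂ E F (G p) = G' (subst₂ E F p)) (g : ℕ →₀ A) :
    subst₂ E F (subst₁ G g) = subst₁ G' g :=
  eq_polyEval _ _ (Φ := subst₂ E F ∘ₗ subst₁ G)
    (fun g => by simp only [LinearMap.comp_apply, subst₁_mulX, hG]) (fun c => by simp) g

lemma subst₂_subst₁_mulX (g : ℕ →₀ A) : subst₂ E F (subst₁ mulX g) = subst₁ E g :=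
  subst₂_subst₁ (subst₂_mulX E F) g

lemma subst₂_subst₁_add (hEF : Commute E F) (g : ℕ →₀ A) :
    subst₂ E F (subst₁ (mulX + mulX₂) g) = subst₁ (E + F) g :=
  subst₂_subst₁ (fun p => by
    simp only [LinearMap.add_apply, map_add, subst₂_mulX, subst₂_mulX₂ hEF]) g

lemma subst₂_swap (hEF : Commute E F) (p : ℕ →₀ ℕ →₀ A) : subst₂ E F (swap p) = subst₂ F E p :=
  eq_polyEval _ _ (Φ := subst₂ E F ∘ₗ swap)
    (fun p => by simp only [LinearMap.comp_apply, subst₂_mulX, subst₂_mulX₂ hEF])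
    (fun g => by simp [subst₂_subst₁_mulX]) p

lemma swap_negAll (p : ℕ →₀ ℕ →₀ A) : swap (negAll D p) = negAll D (swap p) := by
  rw [subst₂_negAll commute_mulX_mulX₂.symm (commute_mulX₂_diff₂ D) (commute_mulX_diff₂ D), negAll]
  simp only [LinearMap.neg_apply, LinearMap.add_apply]
  abel

lemma swap_apply (p : ℕ →₀ ℕ →₀ A) (n m : ℕ) : swap p n m = p m n := by
  induction p using induction_linear with
  | zero => simp
  | add p q hp hq => simp only [map_add, Finsupp.add_apply, hp, hq]
  | single i g =>
    simp only [subst₂, polyEval_single, mulX₂, mapRange_pow, mapRange.linearMap_apply,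
      mapRange_apply, subst₁_mulX_apply, mulX_pow_single, zero_add, single_apply]
    split_ifs <;> simp

end TwoVariables

section LambdaProducts

variable {A : Type} [AddCommGroup A] [Module ℂ A] (D : Module.End ℂ A)

def IsSesqLeft (Q : A →ₗ[ℂ] A →ₗ[ℂ] (ℕ →₀ A)) : Prop :=
  ∀ a b, Q (D a) b = -mulX (Q a b)

def IsSesqRight (Q : A →ₗ[ℂ] A →ₗ[ℂ] (ℕ →₀ A)) : Prop :=
  ∀ a b, Q a (D b) = mapRange.linearMap D (Q a b) + mulX (Q a b)

def IsLeftSymm (P : A →ₗ[ℂ] A →ₗ[ℂ] (ℕ →₀ A)) : Prop :=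
  ∀ a b c n m,
    comp2 P P a b c n m - P a (P b c m) n = comp2 P P b a c m n - P b (P a c n) m

/-- `(a, b) ↦ b_{-λ-∂} a`. -/
def opp (P : A →ₗ[ℂ] A →ₗ[ℂ] (ℕ →₀ A)) : A →ₗ[ℂ] A →ₗ[ℂ] (ℕ →₀ A) :=
  (P.compr₂ (negSubst D)).flip

def bracket (P : A →ₗ[ℂ] A →ₗ[ℂ] (ℕ →₀ A)) : A →ₗ[ℂ] A →ₗ[ℂ] (ℕ →₀ A) := P - opp D P

variable {D} {P Q Q' : A →ₗ[ℂ] A →ₗ[ℂ] (ℕ →₀ A)}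

lemma opp_apply (a b : A) : opp D P a b = negSubst D (P b a) := rfl

lemma bracket_apply (a b : A) : bracket D P a b = P a b - negSubst D (P b a) := rfl

lemma bracket_skew (a b : A) : bracket D P a b = -negSubst D (bracket D P b a) := by
  rw [bracket_apply, bracket_apply, map_sub, negSubst_negSubst]
  abel

lemma isSesqLeft_iff :
    IsSesqLeft D Q ↔ (∀ a b, Q (D a) b 0 = 0) ∧ ∀ a b n, Q (D a) b (n + 1) = -Q a b n := by
  refine ⟨fun h => ⟨fun a b => ?_, fun a b n => ?_⟩, fun ⟨h₀, h₁⟩ a b => Finsupp.ext fun k => ?_⟩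
  · rw [h, Finsupp.neg_apply, mulX_apply_zero, neg_zero]
  · rw [h, Finsupp.neg_apply, mulX_apply_succ]
  · cases k with
    | zero => rw [h₀, Finsupp.neg_apply, mulX_apply_zero, neg_zero]
    | succ n => rw [h₁, Finsupp.neg_apply, mulX_apply_succ]

lemma isSesqRight_iff :
    IsSesqRight D Q ↔ (∀ a b, Q a (D b) 0 = D (Q a b 0)) ∧
      ∀ a b n, Q a (D b) (n + 1) = D (Q a b (n + 1)) + Q a b n := by
  refine ⟨fun h => ⟨fun a b => ?_, fun a b n => ?_⟩, fun ⟨h₀, h₁⟩ a b => Finsupp.ext fun k => ?_⟩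
  · rw [h, Finsupp.add_apply, mulX_apply_zero, add_zero, mapRange.linearMap_apply, mapRange_apply]
  · rw [h, Finsupp.add_apply, mulX_apply_succ, mapRange.linearMap_apply, mapRange_apply]
  · rw [Finsupp.add_apply, mapRange.linearMap_apply, mapRange_apply]
    cases k with
    | zero => rw [h₀, mulX_apply_zero, add_zero]
    | succ n => rw [h₁, mulX_apply_succ]

lemma IsSesqLeft.opp (h : IsSesqLeft D P) : IsSesqRight D (opp D P) := fun a b => by
  rw [opp_apply, opp_apply, h, map_neg, negSubst_mulX, negXD]
  simp only [LinearMap.neg_apply, LinearMap.add_apply, neg_neg]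
  abel

lemma IsSesqRight.opp (h : IsSesqRight D P) : IsSesqLeft D (opp D P) := fun a b => by
  rw [opp_apply, opp_apply, h, map_add, negSubst_mulX, negSubst_mapRange, negXD]
  simp only [LinearMap.neg_apply, LinearMap.add_apply]
  abel

lemma IsSesqLeft.sub (hQ : IsSesqLeft D Q) (hQ' : IsSesqLeft D Q') : IsSesqLeft D (Q - Q') :=
  fun a b => by simp only [LinearMap.sub_apply, hQ a b, hQ' a b, map_sub]; abel

lemma IsSesqRight.sub (hQ : IsSesqRight D Q) (hQ' : IsSesqRight D Q') :
    IsSesqRight D (Q - Q') :=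
  fun a b => by simp only [LinearMap.sub_apply, hQ a b, hQ' a b, map_sub]; abel

end LambdaProducts

section MulLeftRight

variable {A : Type} [AddCommGroup A] [Module ℂ A] {D : Module.End ℂ A}

/-- `g(μ) ↦ a_λ g(μ)`. -/
def mulLeft (Q : A →ₗ[ℂ] A →ₗ[ℂ] (ℕ →₀ A)) (a : A) : (ℕ →₀ A) →ₗ[ℂ] (ℕ →₀ ℕ →₀ A) :=
  polyEval mulX₂ (subst₁ mulX ∘ₗ Q a)

/-- `g(λ) ↦ g(λ)_{λ+μ} c`. -/
def mulRight (Q : A →ₗ[ℂ] A →ₗ[ℂ] (ℕ →₀ A)) (c : A) : (ℕ →₀ A) →ₗ[ℂ] (ℕ →₀ ℕ →₀ A) :=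
  polyEval mulX (subst₁ (mulX + mulX₂) ∘ₗ Q.flip c)

variable (Q Q' : A →ₗ[ℂ] A →ₗ[ℂ] (ℕ →₀ A))

@[simp]
lemma mulLeft_single_zero (a d : A) : mulLeft Q a (single 0 d) = subst₁ mulX (Q a d) := by
  simp [mulLeft]

@[simp]
lemma mulRight_single_zero (c d : A) :
    mulRight Q c (single 0 d) = subst₁ (mulX + mulX₂) (Q d c) := by
  simp [mulRight]

lemma mulLeft_mulX (a : A) (g : ℕ →₀ A) : mulLeft Q a (mulX g) = mulX₂ (mulLeft Q a g) :=
  polyEval_mulX _ _ g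

lemma mulRight_mulX (c : A) (g : ℕ →₀ A) : mulRight Q c (mulX g) = mulX (mulRight Q c g) :=
  polyEval_mulX _ _ g

lemma mulLeft_sub (a : A) (g : ℕ →₀ A) :
    mulLeft (Q - Q') a g = mulLeft Q a g - mulLeft Q' a g := by
  rw [mulLeft, LinearMap.sub_apply, LinearMap.comp_sub, polyEval_sub]
  rfl

lemma mulRight_sub (c : A) (g : ℕ →₀ A) :
    mulRight (Q - Q') c g = mulRight Q c g - mulRight Q' c g := by
  change polyEval _ (_ ∘ₗ (Q.flip c - Q'.flip c)) g = _
  rw [LinearMap.comp_sub, polyEval_sub]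
  rfl

lemma mulLeft_apply (a : A) (g : ℕ →₀ A) (n m : ℕ) : mulLeft Q a g n m = Q a (g m) n := by
  induction g using induction_linear with
  | zero => simp
  | add f g hf hg => simp only [map_add, Finsupp.add_apply, hf, hg]
  | single j v =>
    simp only [mulLeft, polyEval_single, LinearMap.comp_apply, mulX₂, mapRange_pow,
      mapRange.linearMap_apply, mapRange_apply, subst₁_mulX_apply, mulX_pow_single, zero_add,
      single_apply]
    split_ifs <;> simp

lemma mulRight_apply (c : A) (g : ℕ →₀ A) (n m : ℕ) :
    mulRight Q c g n m = ∑ i ∈ Finset.range (n + 1),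
      ((m + n - i).choose (n - i) : ℂ) • Q (g i) c (m + n - i) := by
  induction g using induction_linear with
  | zero => simp
  | add f g hf hg =>
    rw [map_add, Finsupp.add_apply, Finsupp.add_apply, hf, hg, ← Finset.sum_add_distrib]
    simp only [Finsupp.add_apply, map_add, LinearMap.add_apply, smul_add]
  | single j v =>
    rw [mulRight, polyEval_single, LinearMap.comp_apply, mulX_pow_apply]
    split_ifs with hj
    · rw [subst₁_add_apply, Finset.sum_eq_single j, single_eq_same, LinearMap.flip_apply,
        show n - j + m = m + n - j by omega]
      · intro i _ hij
        rw [single_eq_of_ne hij, map_zero, LinearMap.zero_apply, Finsupp.zero_apply, smul_zero]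
      · intro hj'
        exact absurd (Finset.mem_range.2 (by omega)) hj'
    · refine (Finset.sum_eq_zero fun i hi => ?_).symm
      rw [single_eq_of_ne (by rw [Finset.mem_range] at hi; omega), map_zero, LinearMap.zero_apply,
        Finsupp.zero_apply, smul_zero]

lemma mulRight_apply_eq_comp2 (a b c : A) (n m : ℕ) :
    mulRight Q c (Q a b) n m = comp2 Q Q a b c n m := by
  rw [mulRight_apply, comp2]

variable {Q}

lemma mulLeft_mapRange (hQ : IsSesqRight D Q) (a : A) (g : ℕ →₀ A) :
    mulLeft Q a (mapRange.linearMap D g) = mulX (mulLeft Q a g) + diff₂ D (mulLeft Q a g) :=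
  eq_of_comm_mulX mulX₂ (Φ := mulLeft Q a ∘ₗ mapRange.linearMap D)
    (Ψ := (mulX + diff₂ D : Module.End ℂ (ℕ →₀ ℕ →₀ A)) ∘ₗ mulLeft Q a)
    (fun g => by simp only [LinearMap.comp_apply, mapRange_mulX, mulLeft_mulX])
    (fun g => by
      rw [LinearMap.comp_apply, LinearMap.comp_apply, mulLeft_mulX, apply_comm_of_commute
        (commute_mulX_mulX₂.add_left (commute_mulX₂_diff₂ D).symm)])
    (fun d => by
      rw [LinearMap.comp_apply, LinearMap.comp_apply, mapRange.linearMap_apply, mapRange_single,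
        mulLeft_single_zero, mulLeft_single_zero, hQ, map_add,
        subst₁_mapRange (commute_mulX_diff₂ D), subst₁_mulX, LinearMap.add_apply, add_comm]) g

lemma mulLeft_negXD (hQ : IsSesqRight D Q) (a : A) (g : ℕ →₀ A) :
    mulLeft Q a (negXD D g) = negAll D (mulLeft Q a g) := by
  simp only [negXD, negAll, LinearMap.neg_apply, LinearMap.add_apply, map_neg, map_add,
    mulLeft_mulX, mulLeft_mapRange hQ]
  abel

lemma mulRight_mapRange (hQ : IsSesqLeft D Q) (c : A) (g : ℕ →₀ A) :
    mulRight Q c (mapRange.linearMap D g) = -(mulX (mulRight Q c g) + mulX₂ (mulRight Q c g)) := by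
  refine (eq_of_comm_mulX mulX (Φ := mulRight Q c ∘ₗ mapRange.linearMap D)
    (Ψ := (-(mulX + mulX₂) : Module.End ℂ (ℕ →₀ ℕ →₀ A)) ∘ₗ mulRight Q c)
    (fun g => by simp only [LinearMap.comp_apply, mapRange_mulX, mulRight_mulX])
    (fun g => by
      rw [LinearMap.comp_apply, LinearMap.comp_apply, mulRight_mulX, apply_comm_of_commute
        ((Commute.refl _).add_left (commute_mulX_mulX₂ (A := A)).symm).neg_left])
    (fun d => by
      rw [LinearMap.comp_apply, LinearMap.comp_apply, mapRange.linearMap_apply, mapRange_single,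
        mulRight_single_zero, mulRight_single_zero, hQ, map_neg, subst₁_mulX]
      rfl) g).trans ?_
  simp only [LinearMap.comp_apply, LinearMap.neg_apply, LinearMap.add_apply]

lemma mulRight_negXD (hQ : IsSesqLeft D Q) (c : A) (g : ℕ →₀ A) :
    mulRight Q c (negXD D g) = mulX₂ (mulRight Q c g) := by
  simp only [negXD, LinearMap.neg_apply, LinearMap.add_apply, map_neg, map_add,
    mulRight_mulX, mulRight_mapRange hQ]
  abel

end MulLeftRight

section Transport

variable {A : Type} [AddCommGroup A] [Module ℂ A] {D : Module.End ℂ A}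
  {P Q : A →ₗ[ℂ] A →ₗ[ℂ] (ℕ →₀ A)}

lemma mulRight_negSubst (hQ : IsSesqLeft D Q) (c : A) (g : ℕ →₀ A) :
    mulRight Q c (negSubst D g) = swap (mulRight Q c g) :=
  eq_of_comm_mulX mulX₂ (Φ := mulRight Q c ∘ₗ negSubst D) (Ψ := swap ∘ₗ mulRight Q c)
    (fun g => by
      rw [LinearMap.comp_apply, LinearMap.comp_apply, negSubst_mulX, mulRight_negXD hQ])
    (fun g => by rw [LinearMap.comp_apply, LinearMap.comp_apply, mulRight_mulX, subst₂_mulX])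
    (fun d => by
      rw [LinearMap.comp_apply, LinearMap.comp_apply, negSubst_single_zero, mulRight_single_zero,
        subst₂_subst₁_add commute_mulX_mulX₂.symm, add_comm]) g

lemma mulLeft_negSubst (hQ : IsSesqRight D Q) (a : A) (g : ℕ →₀ A) :
    mulLeft Q a (negSubst D g) = subst₂ mulX (negAll D) (mulLeft Q a g) :=
  eq_of_comm_mulX (negAll D) (Φ := mulLeft Q a ∘ₗ negSubst D)
    (Ψ := subst₂ mulX (negAll D) ∘ₗ mulLeft Q a)
    (fun g => by
      rw [LinearMap.comp_apply, LinearMap.comp_apply, negSubst_mulX, mulLeft_negXD hQ])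
    (fun g => by
      rw [LinearMap.comp_apply, LinearMap.comp_apply, mulLeft_mulX,
        subst₂_mulX₂ (commute_mulX_negAll D)])
    (fun d => by
      rw [LinearMap.comp_apply, LinearMap.comp_apply, negSubst_single_zero, mulLeft_single_zero,
        subst₂_subst₁_mulX]) g

lemma swap_mulLeft_negSubst (hQ : IsSesqRight D Q) (b : A) (g : ℕ →₀ A) :
    swap (mulLeft Q b (negSubst D g)) = subst₂ mulX₂ (negAll D) (mulLeft Q b g) :=
  eq_of_comm_mulX (negAll D) (Φ := swap ∘ₗ mulLeft Q b ∘ₗ negSubst D)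
    (Ψ := subst₂ mulX₂ (negAll D) ∘ₗ mulLeft Q b)
    (fun g => by
      simp only [LinearMap.comp_apply, negSubst_mulX, mulLeft_negXD hQ, swap_negAll])
    (fun g => by
      rw [LinearMap.comp_apply, LinearMap.comp_apply, mulLeft_mulX,
        subst₂_mulX₂ (commute_mulX₂_negAll D)])
    (fun d => by
      simp only [LinearMap.comp_apply, negSubst_single_zero, mulLeft_single_zero,
        subst₂_subst₁_mulX]) g

lemma subst₂_mulX₂_negAll_mulRight (a : A) (g : ℕ →₀ A) :
    subst₂ mulX₂ (negAll D) (mulRight P a g) = mulLeft (opp D P) a g :=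
  eq_of_comm_mulX mulX₂ (Φ := subst₂ mulX₂ (negAll D) ∘ₗ mulRight P a)
    (Ψ := mulLeft (opp D P) a)
    (fun g => by rw [LinearMap.comp_apply, LinearMap.comp_apply, mulRight_mulX, subst₂_mulX])
    (fun g => mulLeft_mulX _ a g)
    (fun d => by
      rw [LinearMap.comp_apply, mulRight_single_zero, mulLeft_single_zero,
        subst₂_subst₁_add (commute_mulX₂_negAll D), mulX₂_add_negAll, opp_apply,
        subst₁_negSubst (commute_mulX_diff₂ D)]) g

lemma subst₂_negAll_mulX₂_mulRight (hP : IsSesqLeft D P) (a : A) (g : ℕ →₀ A) :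
    subst₂ (negAll D) mulX₂ (mulRight P a g) = mulLeft (opp D P) a (negSubst D g) :=
  eq_of_comm_mulX (negAll D) (Φ := subst₂ (negAll D) mulX₂ ∘ₗ mulRight P a)
    (Ψ := mulLeft (opp D P) a ∘ₗ negSubst D)
    (fun g => by rw [LinearMap.comp_apply, LinearMap.comp_apply, mulRight_mulX, subst₂_mulX])
    (fun g => by
      rw [LinearMap.comp_apply, LinearMap.comp_apply, negSubst_mulX, mulLeft_negXD hP.opp])
    (fun d => by
      rw [LinearMap.comp_apply, LinearMap.comp_apply, mulRight_single_zero, negSubst_single_zero,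
        mulLeft_single_zero, subst₂_subst₁_add (commute_mulX₂_negAll D).symm, add_comm,
        mulX₂_add_negAll, opp_apply, subst₁_negSubst (commute_mulX_diff₂ D)]) g

lemma mulRight_opp_negSubst (hP : IsSesqRight D P) (c : A) (g : ℕ →₀ A) :
    mulRight (opp D P) c (negSubst D g) = subst₂ (negAll D) mulX₂ (mulLeft P c g) :=
  eq_of_comm_mulX mulX₂ (Φ := mulRight (opp D P) c ∘ₗ negSubst D)
    (Ψ := subst₂ (negAll D) mulX₂ ∘ₗ mulLeft P c)
    (fun g => by
      rw [LinearMap.comp_apply, LinearMap.comp_apply, negSubst_mulX, mulRight_negXD hP.opp])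
    (fun g => by
      rw [LinearMap.comp_apply, LinearMap.comp_apply, mulLeft_mulX,
        subst₂_mulX₂ (commute_mulX₂_negAll D).symm])
    (fun d => by
      rw [LinearMap.comp_apply, LinearMap.comp_apply, negSubst_single_zero, mulRight_single_zero,
        mulLeft_single_zero, opp_apply,
        subst₁_negSubst ((commute_mulX_diff₂ D).add_left (commute_mulX₂_diff₂ D)),
        subst₂_subst₁_mulX]
      rfl) g

lemma subst₂_mulX_negAll_mulRight (b : A) (g : ℕ →₀ A) :
    subst₂ mulX (negAll D) (mulRight P b g) = swap (mulLeft (opp D P) b g) :=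
  eq_of_comm_mulX mulX (Φ := subst₂ mulX (negAll D) ∘ₗ mulRight P b)
    (Ψ := swap ∘ₗ mulLeft (opp D P) b)
    (fun g => by rw [LinearMap.comp_apply, LinearMap.comp_apply, mulRight_mulX, subst₂_mulX])
    (fun g => by
      rw [LinearMap.comp_apply, LinearMap.comp_apply, mulLeft_mulX,
        subst₂_mulX₂ commute_mulX_mulX₂.symm])
    (fun d => by
      rw [LinearMap.comp_apply, LinearMap.comp_apply, mulRight_single_zero, mulLeft_single_zero,
        subst₂_subst₁_add (commute_mulX_negAll D), mulX_add_negAll, subst₂_subst₁_mulX, opp_apply,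
        subst₁_negSubst (commute_mulX₂_diff₂ D)]) g

lemma subst₂_negAll_mulX_mulRight (hP : IsSesqLeft D P) (b : A) (g : ℕ →₀ A) :
    subst₂ (negAll D) mulX (mulRight P b g) = swap (mulLeft (opp D P) b (negSubst D g)) :=
  eq_of_comm_mulX (negAll D) (Φ := subst₂ (negAll D) mulX ∘ₗ mulRight P b)
    (Ψ := swap ∘ₗ mulLeft (opp D P) b ∘ₗ negSubst D)
    (fun g => by rw [LinearMap.comp_apply, LinearMap.comp_apply, mulRight_mulX, subst₂_mulX])
    (fun g => by
      simp only [LinearMap.comp_apply, negSubst_mulX, mulLeft_negXD hP.opp, swap_negAll])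
    (fun d => by
      simp only [LinearMap.comp_apply, mulRight_single_zero, negSubst_single_zero,
        mulLeft_single_zero, subst₂_subst₁_add (commute_mulX_negAll D).symm, add_comm (negAll D),
        mulX_add_negAll, subst₂_subst₁_mulX, opp_apply, subst₁_negSubst (commute_mulX₂_diff₂ D)])
    g

lemma mulRight_opp (c : A) (g : ℕ →₀ A) :
    mulRight (opp D P) c g = subst₂ (negAll D) mulX (mulLeft P c g) :=
  eq_of_comm_mulX mulX (Φ := mulRight (opp D P) c) (Ψ := subst₂ (negAll D) mulX ∘ₗ mulLeft P c)
    (fun g => mulRight_mulX _ c g)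
    (fun g => by
      rw [LinearMap.comp_apply, LinearMap.comp_apply, mulLeft_mulX,
        subst₂_mulX₂ (commute_mulX_negAll D).symm])
    (fun d => by
      rw [LinearMap.comp_apply, mulRight_single_zero, mulLeft_single_zero, opp_apply,
        subst₁_negSubst ((commute_mulX_diff₂ D).add_left (commute_mulX₂_diff₂ D)),
        subst₂_subst₁_mulX]
      rfl) g

end Transport

section Jacobi

variable {A : Type} [AddCommGroup A] [Module ℂ A] {D : Module.End ℂ A}
  {P : A →ₗ[ℂ] A →ₗ[ℂ] (ℕ →₀ A)}

lemma IsLeftSymm.mulRight_sub_mulLeft (hP : IsLeftSymm P) (a b c : A) :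
    mulRight P c (P a b) - mulLeft P a (P b c) =
      swap (mulRight P c (P b a) - mulLeft P b (P a c)) := by
  ext n m
  simp only [Finsupp.sub_apply, swap_apply, mulRight_apply_eq_comp2, mulLeft_apply]
  exact hP a b c n m

theorem mulLeft_bracket (hl : IsSesqLeft D P) (hr : IsSesqRight D P) (hP : IsLeftSymm P)
    (a b c : A) :
    mulLeft (bracket D P) a (bracket D P b c) =
      mulRight (bracket D P) c (bracket D P a b) +
        swap (mulLeft (bracket D P) b (bracket D P a c)) := by
  have h₁ := hP.mulRight_sub_mulLeft a b c
  have h₂ := congrArg (subst₂ mulX₂ (negAll D)) (hP.mulRight_sub_mulLeft b c a)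
  have h₃ := congrArg (subst₂ mulX (negAll D)) (hP.mulRight_sub_mulLeft a c b)
  rw [map_sub, ← mulRight_negSubst hl] at h₁
  simp only [subst₂_swap (commute_mulX₂_negAll D), map_sub] at h₂
  rw [subst₂_mulX₂_negAll_mulRight, ← swap_mulLeft_negSubst hr, subst₂_negAll_mulX₂_mulRight hl,
    ← mulRight_opp_negSubst hr] at h₂
  simp only [subst₂_swap (commute_mulX_negAll D), map_sub] at h₃
  rw [subst₂_mulX_negAll_mulRight, ← mulLeft_negSubst hr, subst₂_negAll_mulX_mulRight hl,
    ← mulRight_opp] at h₃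
  simp only [bracket, mulLeft_sub, mulRight_sub, LinearMap.sub_apply, opp_apply, map_sub]
  linear_combination (norm := module) -h₁ - h₂ + h₃

lemma bracket_jacobi (hl : IsSesqLeft D P) (hr : IsSesqRight D P) (hP : IsLeftSymm P)
    (a b c : A) (n m : ℕ) :
    bracket D P a (bracket D P b c m) n =
      comp2 (bracket D P) (bracket D P) a b c n m + bracket D P b (bracket D P a c n) m := by
  have h := congrArg (fun p => p n m) (mulLeft_bracket hl hr hP a b c)
  simpa only [mulLeft_apply, mulRight_apply_eq_comp2, swap_apply, Finsupp.add_apply] using h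

end Jacobi

end LambdaPoly

open LambdaPoly

theorem ConfAlg.isSesqLeft {A : Type} [AddCommGroup A] [Module ℂ A] (S : ConfAlg A) :
    IsSesqLeft S.D S.mul :=
  isSesqLeft_iff.2 ⟨S.sesq_left_zero, S.sesq_left⟩

theorem ConfAlg.isSesqRight {A : Type} [AddCommGroup A] [Module ℂ A] (S : ConfAlg A) :
    IsSesqRight S.D S.mul :=
  isSesqRight_iff.2 ⟨S.sesq_right_zero, S.sesq_right⟩

def LSConfAlg.subadjacent {A : Type} [AddCommGroup A] [Module ℂ A] (S : LSConfAlg A) :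
    LieConfAlg A :=
  have hl := S.isSesqLeft.sub S.isSesqRight.opp
  have hr := S.isSesqRight.sub S.isSesqLeft.opp
  { D := S.D
    mul := bracket S.D S.mul
    sesq_left_zero := (isSesqLeft_iff.1 hl).1
    sesq_left := (isSesqLeft_iff.1 hl).2
    sesq_right_zero := (isSesqRight_iff.1 hr).1
    sesq_right := (isSesqRight_iff.1 hr).2
    skew := fun a b k => by rw [bracket_skew, Finsupp.neg_apply, csubst_eq_negSubst]
    jacobi := bracket_jacobi S.isSesqLeft S.isSesqRight S.lsym }

/-- the λ-bracket `[a_λ b] = a_λ b - b_{-λ-∂} a` makes a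
left-symmetric conformal algebra into a Lie conformal algebra. -/
theorem subadjacent_lie_conformal {A : Type} [AddCommGroup A] [Module ℂ A]
    (S : LSConfAlg A) :
    ∃ L : LieConfAlg A, L.D = S.D ∧
      ∀ a b k, L.mul a b k = S.mul a b k - csubst S.D (S.mul b a) k :=
  ⟨S.subadjacent, rfl, fun a b k => by
    rw [csubst_eq_negSubst, ← Finsupp.sub_apply, ← bracket_apply]
    rfl⟩
end
end

section
/- Let R be a Lie conformal algebra, ρ: R → gc(V) a representation of R on a C[∂]-module V, and T: V → R a C[∂]-module homomorphism that is an O-operator associated with ρ, i.e. [T(u)_λ T(v)] = T(ρ(T(u))_λ v - ρ(T(v))_{-λ-∂} u) for all u, v ∈ V. Then the λ-product u *_λ v := ρ(T(u))_λ v defines a left-symmetric conformal algebra structure on V. -/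
open Finsupp

noncomputable section

/-- A representation of a Lie conformal algebra `L` on a `ℂ[∂]`-module `V`. -/
structure ConfRep {A : Type} [AddCommGroup A] [Module ℂ A]
    (L : LieConfAlg A) (V : Type) [AddCommGroup V] [Module ℂ V] where
  DV : Module.End ℂ V
  act : A →ₗ[ℂ] V →ₗ[ℂ] (ℕ →₀ V)
  sesq_left_zero : ∀ a v, act (L.D a) v 0 = 0
  sesq_left : ∀ a v n, act (L.D a) v (n + 1) = - act a v n
  sesq_right_zero : ∀ a v, act a (DV v) 0 = DV (act a v 0)
  sesq_right : ∀ a v n, act a (DV v) (n + 1) = DV (act a v (n + 1)) + act a v n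
  rep : ∀ a b v n m,
    comp2 L.mul act a b v n m = act a (act b v m) n - act b (act a v n) m

/-- `T : V → R` is an `𝒪`-operator associated with the representation `ρ`:
it is a `ℂ[∂]`-module map and
`[T(u)_λ T(v)] = T(ρ(T u)_λ v - ρ(T v)_{-λ-∂} u)`, coefficientwise. -/
def IsOOperator {A V : Type} [AddCommGroup A] [Module ℂ A] [AddCommGroup V] [Module ℂ V]
    {L : LieConfAlg A} (ρ : ConfRep L V) (T : V →ₗ[ℂ] A) : Prop :=
  (∀ v, T (ρ.DV v) = L.D (T v)) ∧
  ∀ u v k, L.mul (T u) (T v) k = T (ρ.act (T u) v k - csubst ρ.DV (ρ.act (T v) u) k)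



lemma key_binom : ∀ k m n : ℕ, k ≤ m + n →
    ∑ i ∈ Finset.range (n+1), (-1:ℂ)^i * (k.choose i) * (((m+n-i).choose (n-i) : ℕ) : ℂ)
      = if k ≤ m then (((m+n-k).choose n : ℕ) : ℂ) else 0 := by
  intro k
  induction k with
  | zero =>
    intro m n _
    rw [Finset.sum_eq_single 0]
    · simp
    · intro b _ hb
      rcases Nat.exists_eq_succ_of_ne_zero hb with ⟨c, rfl⟩
      simp
    · simp
  | succ k ih =>
    intro m n hk
    match n with
    | 0 =>
      have hkm : k + 1 ≤ m := by omega
      simp [hkm]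
    | Nat.succ n =>
      rw [Finset.sum_range_succ']
      have step : ∀ j ∈ Finset.range (n+1),
          (-1:ℂ)^(j+1) * ((k+1).choose (j+1)) * (((m+(n+1)-(j+1)).choose ((n+1)-(j+1)) : ℕ) : ℂ)
          = (-1:ℂ)^(j+1) * (k.choose (j+1)) * (((m+(n+1)-(j+1)).choose ((n+1)-(j+1)) : ℕ) : ℂ)
            - (-1:ℂ)^j * (k.choose j) * (((m+n-j).choose (n-j) : ℕ) : ℂ) := by
        intro j _
        have h1 : m+(n+1)-(j+1) = m+n-j := by omega
        have h2 : (n+1)-(j+1) = n-j := by omega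
        rw [h1, h2, Nat.choose_succ_succ]
        push_cast
        ring
      rw [Finset.sum_congr rfl step, Finset.sum_sub_distrib]
      have e1 : (∑ j ∈ Finset.range (n+1),
            (-1:ℂ)^(j+1) * (k.choose (j+1)) * (((m+(n+1)-(j+1)).choose ((n+1)-(j+1)) : ℕ) : ℂ))
          + ((-1:ℂ)^0 * ((k+1).choose 0) * (((m+(n+1)-0).choose ((n+1)-0) : ℕ) : ℂ))
          = ∑ i ∈ Finset.range (n+1+1),
            (-1:ℂ)^i * (k.choose i) * (((m+(n+1)-i).choose ((n+1)-i) : ℕ) : ℂ) := by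
        conv_rhs => rw [Finset.sum_range_succ']
        congr 1
        simp
      have hk1 : k ≤ m + (n+1) := by omega
      have hk2 : k ≤ m + n := by omega
      rw [sub_add_eq_add_sub, e1, ih m (n+1) hk1, ih m n hk2]
      by_cases h : k + 1 ≤ m
      · have h' : k ≤ m := by omega
        simp only [h, h', if_true]
        have hp : m + (n+1) - k = (m + n - k) + 1 := by omega
        rw [hp, Nat.choose_succ_succ']
        have hq : m + (n+1) - (k+1) = m + n - k := by omega
        rw [hq]
        push_cast
        ring
      · by_cases h' : k ≤ m
        · have : k = m := by omega
          subst this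
          simp [h]
        · simp [h, h']

section Helpers

variable {A V : Type} [AddCommGroup A] [Module ℂ A] [AddCommGroup V] [Module ℂ V]
variable {L : LieConfAlg A} (ρ : ConfRep L V) (T : V →ₗ[ℂ] A)

lemma neg_one_aux (i k : ℕ) (h : i ≤ k) : ((-1:ℂ))^k * (-1)^(k-i) = (-1)^i := by
  have h2 : k + (k - i) = 2*(k-i) + i := by omega
  rw [← pow_add, h2, pow_add, pow_mul]
  norm_num

lemma TD_pow (hT1 : ∀ v, T (ρ.DV v) = L.D (T v)) (p : ℕ) (v : V) :
    T ((ρ.DV ^ p) v) = (L.D ^ p) (T v) := by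
  induction p with
  | zero => simp
  | succ p ih =>
    rw [pow_succ', pow_succ', Module.End.mul_apply, Module.End.mul_apply, hT1, ih]

lemma act_D_pow (a : A) (w : V) (p j : ℕ) :
    ρ.act ((L.D ^ p) a) w j
      = if p ≤ j then ((-1:ℂ)^p) • ρ.act a w (j - p) else 0 := by
  induction p generalizing a j with
  | zero => simp
  | succ p ih =>
    rw [pow_succ, Module.End.mul_apply, ih]
    by_cases h : p + 1 ≤ j
    · have hp : p ≤ j := by omega
      have hj : j - p = (j - (p+1)) + 1 := by omega
      rw [if_pos hp, if_pos h, hj, ρ.sesq_left, pow_succ]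
      rw [mul_smul]; simp
    · by_cases hp : p ≤ j
      · have hj : j - p = 0 := by omega
        rw [if_pos hp, if_neg h, hj, ρ.sesq_left_zero, smul_zero]
      · rw [if_neg hp, if_neg h]

lemma X_eq (hT1 : ∀ v, T (ρ.DV v) = L.D (T v)) (g : ℕ →₀ V) (w : V) (n m : ℕ) :
    ∑ i ∈ Finset.range (n+1), (((m+n-i).choose (n-i) : ℕ) : ℂ) •
        ρ.act (T (csubst ρ.DV g i)) w (m+n-i)
      = ∑ i ∈ Finset.range (m+1), (((m+n-i).choose (m-i) : ℕ) : ℂ) •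
        ρ.act (T (g i)) w (m+n-i) := by
  have hterm : ∀ i, ρ.act (T (csubst ρ.DV g i)) w (m+n-i)
      = ∑ k ∈ g.support, ((-1:ℂ)^k * (k.choose i : ℂ)) •
          ρ.act ((L.D ^ (k-i)) (T (g k))) w (m+n-i) := by
    intro i
    rw [csubst, Finsupp.sum, map_sum]
    simp only [map_smul, TD_pow ρ T hT1, map_sum, LinearMap.sum_apply,
      Finsupp.finset_sum_apply, LinearMap.smul_apply, Finsupp.smul_apply]
  rw [Finset.sum_congr rfl (fun i _ => by rw [hterm i, Finset.smul_sum]),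
    Finset.sum_comm]
  have inner : ∀ k ∈ g.support, (∑ i ∈ Finset.range (n+1),
      (((m+n-i).choose (n-i) : ℕ):ℂ) • (((-1:ℂ)^k * (k.choose i : ℂ)) •
        ρ.act ((L.D ^ (k-i)) (T (g k))) w (m+n-i)))
      = (if k ≤ m then (((m+n-k).choose (m-k) : ℕ):ℂ) else 0) •
          ρ.act (T (g k)) w (m+n-k) := by
    intro k _
    by_cases hkmn : k ≤ m + n
    · have hstep : ∀ i ∈ Finset.range (n+1),
          (((m+n-i).choose (n-i) : ℕ):ℂ) • (((-1:ℂ)^k * (k.choose i : ℂ)) •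
            ρ.act ((L.D ^ (k-i)) (T (g k))) w (m+n-i))
          = ((-1:ℂ)^i * (k.choose i : ℂ) * (((m+n-i).choose (n-i) : ℕ):ℂ)) •
              ρ.act (T (g k)) w (m+n-k) := by
        intro i hi
        rw [act_D_pow]
        by_cases hik : i ≤ k
        · have hcond : k - i ≤ m+n-i := by omega
          have hidx : m+n-i-(k-i) = m+n-k := by omega
          rw [if_pos hcond, hidx, smul_smul, smul_smul]
          congr 1
          have := neg_one_aux i k hik
          calc (((m+n-i).choose (n-i) : ℕ):ℂ) * ((-1:ℂ)^k * (k.choose i : ℂ)) * (-1)^(k-i)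
              = ((-1:ℂ)^k * (-1)^(k-i)) * ((k.choose i : ℂ) * (((m+n-i).choose (n-i) : ℕ):ℂ)) := by ring
            _ = (-1:ℂ)^i * (k.choose i : ℂ) * (((m+n-i).choose (n-i) : ℕ):ℂ) := by rw [this]; ring
        · have hch : k.choose i = 0 := Nat.choose_eq_zero_of_lt (by omega)
          simp [hch]
      rw [Finset.sum_congr rfl hstep, ← Finset.sum_smul, key_binom k m n hkmn]
      by_cases hkm : k ≤ m
      · rw [if_pos hkm, if_pos hkm]
        congr 2
        rw [← Nat.choose_symm (show n ≤ m+n-k by omega)]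
        congr 1
        omega
      · rw [if_neg hkm, if_neg hkm]
    · have hz : ∀ i ∈ Finset.range (n+1),
          (((m+n-i).choose (n-i) : ℕ):ℂ) • (((-1:ℂ)^k * (k.choose i : ℂ)) •
            ρ.act ((L.D ^ (k-i)) (T (g k))) w (m+n-i)) = 0 := by
        intro i hi
        simp only [Finset.mem_range] at hi
        rw [act_D_pow, if_neg (by omega : ¬ (k - i ≤ m+n-i))]
        simp
      rw [Finset.sum_eq_zero hz, if_neg (by omega), zero_smul]
  rw [Finset.sum_congr rfl inner]
  simp only [ite_smul, zero_smul]
  rw [← Finset.sum_filter]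
  apply Finset.sum_subset
  · intro k hk
    simp only [Finset.mem_filter] at hk
    simp only [Finset.mem_range]
    omega
  · intro k hk hk2
    simp only [Finset.mem_range] at hk
    simp only [Finset.mem_filter] at hk2
    have : k ∉ g.support := fun h => hk2 ⟨h, by omega⟩
    rw [Finsupp.notMem_support_iff] at this
    simp [this]

lemma comp2_expand (hT : IsOOperator ρ T) (u v w : V) (n m : ℕ) :
    comp2 (ρ.act ∘ₗ T) (ρ.act ∘ₗ T) u v w n m
      = ρ.act (T u) (ρ.act (T v) w m) n - ρ.act (T v) (ρ.act (T u) w n) m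
        + comp2 (ρ.act ∘ₗ T) (ρ.act ∘ₗ T) v u w m n := by
  obtain ⟨hT1, hT2⟩ := hT
  have hTsplit : ∀ i, T (ρ.act (T u) v i)
      = L.mul (T u) (T v) i + T (csubst ρ.DV (ρ.act (T v) u) i) := by
    intro i
    rw [hT2 u v i, map_sub]
    abel
  have step1 : comp2 (ρ.act ∘ₗ T) (ρ.act ∘ₗ T) u v w n m
      = comp2 L.mul ρ.act (T u) (T v) w n m
        + ∑ i ∈ Finset.range (n+1), (((m+n-i).choose (n-i) : ℕ) : ℂ) •
            ρ.act (T (csubst ρ.DV (ρ.act (T v) u) i)) w (m+n-i) := by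
    rw [comp2, comp2, ← Finset.sum_add_distrib]
    refine Finset.sum_congr rfl fun i _ => ?_
    simp only [LinearMap.comp_apply]
    rw [hTsplit i]
    simp only [map_add, LinearMap.add_apply, Finsupp.add_apply, smul_add]
  have step2 : comp2 (ρ.act ∘ₗ T) (ρ.act ∘ₗ T) v u w m n
      = ∑ i ∈ Finset.range (m+1), (((m+n-i).choose (m-i) : ℕ) : ℂ) •
          ρ.act (T (ρ.act (T v) u i)) w (m+n-i) := by
    rw [comp2]
    simp only [LinearMap.comp_apply, Nat.add_comm n m]
  rw [step1, ρ.rep, X_eq ρ T hT1 (ρ.act (T v) u) w n m, step2]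

end Helpers

/-- if `T` is an `𝒪`-operator associated with `ρ`, then
`u *_λ v := ρ(T u)_λ v` is a left-symmetric conformal algebra structure on `V`. -/
theorem ooperator_gives_left_symmetric {A V : Type}
    [AddCommGroup A] [Module ℂ A] [AddCommGroup V] [Module ℂ V]
    (L : LieConfAlg A) (ρ : ConfRep L V) (T : V →ₗ[ℂ] A)
    (hT : IsOOperator ρ T) :
    ∃ S : LSConfAlg V, S.D = ρ.DV ∧ ∀ u v n, S.mul u v n = ρ.act (T u) v n := by
  obtain ⟨hT1, hT2⟩ := hT
  refine ⟨{
    D := ρ.DV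
    mul := ρ.act ∘ₗ T
    sesq_left_zero := fun a b => by
      simp only [LinearMap.comp_apply, hT1]
      exact ρ.sesq_left_zero (T a) b
    sesq_left := fun a b k => by
      simp only [LinearMap.comp_apply, hT1]
      exact ρ.sesq_left (T a) b k
    sesq_right_zero := fun a b => ρ.sesq_right_zero (T a) b
    sesq_right := fun a b k => ρ.sesq_right (T a) b k
    lsym := fun a b c n m => by
      rw [comp2_expand ρ T ⟨hT1, hT2⟩ a b c n m]
      simp only [LinearMap.comp_apply]
      abel }, rfl, fun u v k => rfl⟩
end
end

section
/- Let R be a Lie conformal algebra and T: R → R a Rota-Baxter operator of weight 0, i.e. a C[∂]-module homomorphism satisfying [T(a)_λ T(b)] = T([a_λ T(b)]) + T([T(a)_λ b]) for all a, b ∈ R. Then the λ-product a_λ b := [T(a)_λ b] defines a left-symmetric conformal algebra structure on R. -/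
open Finsupp

noncomputable section

section Aux

variable {A : Type} [AddCommGroup A] [Module ℂ A]

/-- The key combinatorial identity. -/
lemma key_sum (m : ℕ) : ∀ (j n : ℕ), j ≤ m + n →
    ∑ i ∈ Finset.range (n+1), (-1:ℂ)^i * ((j.choose i : ℕ) : ℂ) * (((m+n-i).choose (n-i) : ℕ) : ℂ)
      = if j ≤ m then (((m+n-j).choose (m-j) : ℕ) : ℂ) else 0 := by
  intro j
  induction j with
  | zero =>
    intro n _
    rw [if_pos (Nat.zero_le m)]
    rw [Finset.sum_eq_single 0]
    · have h1 : (m+n).choose n = (m+n).choose m := by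
        rw [← Nat.choose_symm (by omega : m ≤ m + n)]
        congr 1
        omega
      simp [h1]
    · intro i _ hi
      have : Nat.choose 0 i = 0 := Nat.choose_eq_zero_of_lt (by omega)
      simp [this]
    · intro h
      exact absurd (Finset.mem_range.mpr (by omega)) h
  | succ j ih =>
    intro n hn
    cases n with
    | zero =>
      have hjm : j + 1 ≤ m := by omega
      rw [if_pos hjm]
      have h1 : (m+0-(j+1)).choose (m-(j+1)) = 1 := by
        rw [show m+0-(j+1) = m-(j+1) from by omega, Nat.choose_self]
      simp [h1]
    | succ n' =>
      have hsplit :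
          ∑ i ∈ Finset.range (n'+1+1), (-1:ℂ)^i * (((j+1).choose i : ℕ) : ℂ) * (((m+(n'+1)-i).choose ((n'+1)-i) : ℕ) : ℂ)
            = (∑ i ∈ Finset.range (n'+1), (-1:ℂ)^(i+1) * (((j+1).choose (i+1) : ℕ) : ℂ) * (((m+n'-i).choose (n'-i) : ℕ) : ℂ))
              + (((m+(n'+1)).choose (n'+1) : ℕ) : ℂ) := by
        rw [Finset.sum_range_succ']
        congr 1
        · refine Finset.sum_congr rfl fun i hi => ?_
          congr 3 <;> omega
        · simp
      rw [hsplit]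
      have hA :
          ∑ i ∈ Finset.range (n'+1), (-1:ℂ)^(i+1) * (((j+1).choose (i+1) : ℕ) : ℂ) * (((m+n'-i).choose (n'-i) : ℕ) : ℂ)
            = (-(∑ i ∈ Finset.range (n'+1), (-1:ℂ)^i * ((j.choose i : ℕ) : ℂ) * (((m+n'-i).choose (n'-i) : ℕ) : ℂ)))
              + ∑ i ∈ Finset.range (n'+1), (-1:ℂ)^(i+1) * ((j.choose (i+1) : ℕ) : ℂ) * (((m+n'-i).choose (n'-i) : ℕ) : ℂ) := by
        rw [← Finset.sum_neg_distrib, ← Finset.sum_add_distrib]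
        refine Finset.sum_congr rfl fun i _ => ?_
        have hp : (((j+1).choose (i+1) : ℕ) : ℂ) = ((j.choose i : ℕ) : ℂ) + ((j.choose (i+1) : ℕ) : ℂ) := by
          rw [Nat.choose_succ_succ]
          push_cast
          ring
        rw [hp]
        ring
      rw [hA]
      have hB :
          ∑ i ∈ Finset.range (n'+1+1), (-1:ℂ)^i * ((j.choose i : ℕ) : ℂ) * (((m+(n'+1)-i).choose ((n'+1)-i) : ℕ) : ℂ)
            = (∑ i ∈ Finset.range (n'+1), (-1:ℂ)^(i+1) * ((j.choose (i+1) : ℕ) : ℂ) * (((m+n'-i).choose (n'-i) : ℕ) : ℂ))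
              + (((m+(n'+1)).choose (n'+1) : ℕ) : ℂ) := by
        rw [Finset.sum_range_succ']
        congr 1
        · refine Finset.sum_congr rfl fun i hi => ?_
          congr 3 <;> omega
        · simp
      rw [add_assoc, ← hB, ih n' (by omega), ih (n'+1) (by omega)]
      by_cases h1 : j + 1 ≤ m
      · have hj : j ≤ m := by omega
        rw [if_pos hj, if_pos hj, if_pos h1]
        have e1 : m+(n'+1)-j = (m+n'-j)+1 := by omega
        have e2 : m-j = (m-(j+1))+1 := by omega
        have e3 : m+(n'+1)-(j+1) = m+n'-j := by omega
        rw [e1, e3]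
        rw [show (m+n'-j+1).choose (m-j) = (m+n'-j+1).choose ((m-(j+1))+1) from by rw [← e2]]
        rw [Nat.choose_succ_succ]
        rw [show (m+n'-j).choose (m-j) = (m+n'-j).choose ((m-(j+1))+1) from by rw [← e2]]
        push_cast
        ring
      · by_cases h2 : j ≤ m
        · have hjm : j = m := by omega
          subst hjm
          rw [if_pos le_rfl, if_pos le_rfl, if_neg h1]
          simp [Nat.sub_self]
        · rw [if_neg h2, if_neg h2, if_neg (by omega)]
          ring

lemma mul_pow_left (C : ConfAlg A) (p : ℕ) (x c : A) (k : ℕ) :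
    C.mul ((C.D ^ p) x) c k = if p ≤ k then ((-1:ℂ)^p) • C.mul x c (k - p) else 0 := by
  induction p generalizing x k with
  | zero => simp
  | succ p ih =>
    have hx : (C.D ^ (p+1)) x = (C.D ^ p) (C.D x) := by
      rw [pow_succ, Module.End.mul_apply]
    rw [hx, ih]
    by_cases h1 : p + 1 ≤ k
    · rw [if_pos (by omega : p ≤ k), if_pos h1]
      have e : k - p = (k - (p+1)) + 1 := by omega
      rw [e, C.sesq_left]
      have hs : ((-1:ℂ)^(p+1)) = -((-1:ℂ)^p) := by ring
      rw [hs, smul_neg, neg_smul]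
    · by_cases h0 : p ≤ k
      · have hkp : k = p := by omega
        subst hkp
        rw [if_pos le_rfl, if_neg h1, Nat.sub_self, C.sesq_left_zero, smul_zero]
      · rw [if_neg h0, if_neg h1]

/-- The central computation: the coefficientwise effect of substituting
`μ ↦ -λ-∂` in the left slot of a bracket applied with total `∂ = -(λ+μ)`. -/
lemma core (C : ConfAlg A) (T : A →ₗ[ℂ] A)
    (hTD : ∀ a, T (C.D a) = C.D (T a)) (f : ℕ →₀ A) (c : A) (n m : ℕ) :
    ∑ i ∈ Finset.range (n+1),
        (((m+n-i).choose (n-i) : ℕ) : ℂ) • C.mul (T (csubst C.D f i)) c (m+n-i)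
      = ∑ j ∈ Finset.range (m+1),
        (((n+m-j).choose (m-j) : ℕ) : ℂ) • C.mul (T (f j)) c (n+m-j) := by
  have hTpow : ∀ (q : ℕ) (x : A), T ((C.D ^ q) x) = (C.D ^ q) (T x) := by
    intro q
    induction q with
    | zero => intro x; simp
    | succ q ihq =>
      intro x
      rw [pow_succ, Module.End.mul_apply, ihq, hTD, ← Module.End.mul_apply, ← pow_succ]
  have hm' : ∀ (x y : A) (k : ℕ), C.mul (x + y) c k = C.mul x c k + C.mul y c k := by
    intro x y k
    simp [map_add]
  have hlin : ∀ (k : ℕ) (s : Finset ℕ) (g : ℕ → A),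
      C.mul (∑ j ∈ s, g j) c k = ∑ j ∈ s, C.mul (g j) c k := by
    intro k s g
    induction s using Finset.cons_induction with
    | empty => simp
    | cons j s hj ihs => rw [Finset.sum_cons, Finset.sum_cons, hm', ihs]
  have hsm : ∀ (r : ℂ) (x : A) (k : ℕ), C.mul (r • x) c k = r • C.mul x c k := by
    intro r x k
    simp [map_smul]
  rw [show n + m = m + n from add_comm n m]
  have hcs : ∀ i, T (csubst C.D f i)
      = ∑ j ∈ f.support, ((-1:ℂ)^j * ((j.choose i : ℕ) : ℂ)) • ((C.D^(j-i)) (T (f j))) := by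
    intro i
    unfold csubst
    rw [Finsupp.sum, map_sum]
    exact Finset.sum_congr rfl fun j _ => by rw [map_smul, hTpow]
  calc
    ∑ i ∈ Finset.range (n+1), (((m+n-i).choose (n-i) : ℕ) : ℂ) • C.mul (T (csubst C.D f i)) c (m+n-i)
        = ∑ i ∈ Finset.range (n+1), ∑ j ∈ f.support,
            (((m+n-i).choose (n-i) : ℕ) : ℂ) •
              (((-1:ℂ)^j * ((j.choose i : ℕ) : ℂ)) • C.mul ((C.D^(j-i)) (T (f j))) c (m+n-i)) := by
          refine Finset.sum_congr rfl fun i _ => ?_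
          rw [hcs i, hlin, Finset.smul_sum]
          exact Finset.sum_congr rfl fun j _ => by rw [hsm]
    _ = ∑ j ∈ f.support, ∑ i ∈ Finset.range (n+1),
            (((m+n-i).choose (n-i) : ℕ) : ℂ) •
              (((-1:ℂ)^j * ((j.choose i : ℕ) : ℂ)) • C.mul ((C.D^(j-i)) (T (f j))) c (m+n-i)) :=
          Finset.sum_comm
    _ = ∑ j ∈ f.support,
            (if j ≤ m then (((m+n-j).choose (m-j) : ℕ) : ℂ) else 0) • C.mul (T (f j)) c (m+n-j) := by
          refine Finset.sum_congr rfl fun j _ => ?_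
          by_cases hjmn : j ≤ m + n
          · have hterm : ∀ i ∈ Finset.range (n+1),
                (((m+n-i).choose (n-i) : ℕ) : ℂ) •
                  (((-1:ℂ)^j * ((j.choose i : ℕ) : ℂ)) • C.mul ((C.D^(j-i)) (T (f j))) c (m+n-i))
                  = ((-1:ℂ)^i * ((j.choose i : ℕ) : ℂ) * (((m+n-i).choose (n-i) : ℕ) : ℂ)) •
                      C.mul (T (f j)) c (m+n-j) := by
              intro i hi
              simp only [Finset.mem_range] at hi
              by_cases hij : i ≤ j
              · rw [mul_pow_left C (j-i) (T (f j)) c (m+n-i), if_pos (by omega : j - i ≤ m+n-i)]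
                rw [show m+n-i-(j-i) = m+n-j from by omega]
                rw [smul_smul, smul_smul]
                congr 1
                have hpow : (-1:ℂ)^j * (-1:ℂ)^(j-i) = (-1:ℂ)^i := by
                  rw [← pow_add, show j + (j-i) = 2*(j-i) + i from by omega, pow_add, pow_mul,
                    neg_one_sq, one_pow, one_mul]
                linear_combination ((((m+n-i).choose (n-i) : ℕ) : ℂ) * ((j.choose i : ℕ) : ℂ)) * hpow
              · have hc : (j.choose i) = 0 := Nat.choose_eq_zero_of_lt (by omega)
                simp [hc]
            rw [Finset.sum_congr rfl hterm, ← Finset.sum_smul, key_sum m j n hjmn]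
          · have hz : ∀ i ∈ Finset.range (n+1),
                (((m+n-i).choose (n-i) : ℕ) : ℂ) •
                  (((-1:ℂ)^j * ((j.choose i : ℕ) : ℂ)) • C.mul ((C.D^(j-i)) (T (f j))) c (m+n-i)) = 0 := by
              intro i hi
              simp only [Finset.mem_range] at hi
              have h := mul_pow_left C (j-i) (T (f j)) c (m+n-i)
              rw [if_neg (by omega)] at h
              rw [h, smul_zero, smul_zero]
            rw [Finset.sum_eq_zero hz, if_neg (by omega), zero_smul]
    _ = ∑ j ∈ f.support ∪ Finset.range (m+1),
            (if j ≤ m then (((m+n-j).choose (m-j) : ℕ) : ℂ) else 0) • C.mul (T (f j)) c (m+n-j) := by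
          refine Finset.sum_subset Finset.subset_union_left fun j _ hj => ?_
          rw [Finsupp.notMem_support_iff.mp hj]
          simp
    _ = ∑ j ∈ Finset.range (m+1),
            (if j ≤ m then (((m+n-j).choose (m-j) : ℕ) : ℂ) else 0) • C.mul (T (f j)) c (m+n-j) := by
          refine (Finset.sum_subset Finset.subset_union_right fun j _ hj => ?_).symm
          simp only [Finset.mem_range, not_lt] at hj
          rw [if_neg (by omega), zero_smul]
    _ = ∑ j ∈ Finset.range (m+1), (((m+n-j).choose (m-j) : ℕ) : ℂ) • C.mul (T (f j)) c (m+n-j) := by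
          refine Finset.sum_congr rfl fun j hj => ?_
          simp only [Finset.mem_range] at hj
          rw [if_pos (by omega)]

end Aux

/-- a Rota-Baxter operator of weight `0` on a Lie conformal algebra
yields the left-symmetric conformal product `a_λ b := [T(a)_λ b]`. -/
theorem rota_baxter_gives_left_symmetric {A : Type} [AddCommGroup A] [Module ℂ A]
    (L : LieConfAlg A) (T : A →ₗ[ℂ] A)
    (hTD : ∀ a, T (L.D a) = L.D (T a))
    (hRB : ∀ a b k, L.mul (T a) (T b) k
      = T (L.mul a (T b) k) + T (L.mul (T a) b k)) :
    ∃ S : LSConfAlg A, S.D = L.D ∧ ∀ a b k, S.mul a b k = L.mul (T a) b k := by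
  refine ⟨⟨⟨L.D, L.mul ∘ₗ T, ?_, ?_, ?_, ?_⟩, ?_⟩, rfl, fun a b k => rfl⟩
  · intro a b
    show L.mul (T (L.D a)) b 0 = 0
    rw [hTD]
    exact L.sesq_left_zero (T a) b
  · intro a b n
    show L.mul (T (L.D a)) b (n+1) = - L.mul (T a) b n
    rw [hTD]
    exact L.sesq_left (T a) b n
  · intro a b
    exact L.sesq_right_zero (T a) b
  · intro a b n
    exact L.sesq_right (T a) b n
  · intro a b c n m
    set M : A →ₗ[ℂ] A →ₗ[ℂ] (ℕ →₀ A) := L.mul ∘ₗ T with hMdef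
    have jac : M a (M b c m) n = comp2 L.mul L.mul (T a) (T b) c n m + M b (M a c n) m :=
      L.jacobi (T a) (T b) c n m
    have hsub : ∀ i, T (L.mul (T a) b i) = L.mul (T a) (T b) i - T (L.mul a (T b) i) := by
      intro i
      have h := hRB a b i
      rw [h]
      abel
    have key2 : comp2 M M a b c n m
        = comp2 L.mul L.mul (T a) (T b) c n m + comp2 M M b a c m n := by
      have e1 : comp2 M M a b c n m = ∑ i ∈ Finset.range (n+1),
          (((m+n-i).choose (n-i) : ℕ) : ℂ) • L.mul (T (L.mul (T a) b i)) c (m+n-i) := rfl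
      have e2 : comp2 L.mul L.mul (T a) (T b) c n m = ∑ i ∈ Finset.range (n+1),
          (((m+n-i).choose (n-i) : ℕ) : ℂ) • L.mul (L.mul (T a) (T b) i) c (m+n-i) := rfl
      have e3 : comp2 M M b a c m n = ∑ j ∈ Finset.range (m+1),
          (((n+m-j).choose (m-j) : ℕ) : ℂ) • L.mul (T (L.mul (T b) a j)) c (n+m-j) := rfl
      have hB : ∑ i ∈ Finset.range (n+1),
            (((m+n-i).choose (n-i) : ℕ) : ℂ) • L.mul (T (L.mul a (T b) i)) c (m+n-i)
          = - comp2 M M b a c m n := by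
        have hstep : ∀ i, L.mul (T (L.mul a (T b) i)) c (m+n-i)
            = - L.mul (T (csubst L.D (L.mul (T b) a) i)) c (m+n-i) := by
          intro i
          rw [L.skew a (T b) i, map_neg, map_neg, LinearMap.neg_apply, Finsupp.neg_apply]
        calc ∑ i ∈ Finset.range (n+1),
              (((m+n-i).choose (n-i) : ℕ) : ℂ) • L.mul (T (L.mul a (T b) i)) c (m+n-i)
            = - ∑ i ∈ Finset.range (n+1),
              (((m+n-i).choose (n-i) : ℕ) : ℂ) • L.mul (T (csubst L.D (L.mul (T b) a) i)) c (m+n-i) := by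
              rw [← Finset.sum_neg_distrib]
              exact Finset.sum_congr rfl fun i _ => by rw [hstep i, smul_neg]
          _ = - comp2 M M b a c m n := by
              rw [core L.toConfAlg T hTD (L.mul (T b) a) c n m, e3]
      rw [e1, e2]
      have hterm : ∀ i ∈ Finset.range (n+1),
          (((m+n-i).choose (n-i) : ℕ) : ℂ) • L.mul (T (L.mul (T a) b i)) c (m+n-i)
            = (((m+n-i).choose (n-i) : ℕ) : ℂ) • L.mul (L.mul (T a) (T b) i) c (m+n-i)
              - (((m+n-i).choose (n-i) : ℕ) : ℂ) • L.mul (T (L.mul a (T b) i)) c (m+n-i) := by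
        intro i _
        rw [hsub i, map_sub, LinearMap.sub_apply, Finsupp.sub_apply, smul_sub]
      rw [Finset.sum_congr rfl hterm, Finset.sum_sub_distrib, hB, sub_neg_eq_add]
    show comp2 M M a b c n m - M a (M b c m) n = comp2 M M b a c m n - M b (M a c n) m
    rw [key2, jac]
    abel
end
end

section
/- Let R be a Lie conformal algebra, ρ: R → gc(V) a representation, and T: V → R a C[∂]-module homomorphism. Then u *_λ v := ρ(T(u))_λ v defines a left-symmetric conformal algebra structure on V if and only if for all u, v ∈ V, the element [T(u)_λ T(v)] - T(ρ(T(u))_λ v - ρ(T(v))_{-λ-∂} u) lies in ker(ρ)[λ]. -/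
open Finsupp

noncomputable section

/-! Write `D(u, v)_λ := [T(u)_λ T(v)] - T(ρ(T u)_λ v - ρ(T v)_{-λ-∂} u)`. Expanding the left-symmetry
defect of `u *_λ v := ρ(T u)_λ v` with the representation identity for `ρ([T u_λ T v])` and with
`T ∂ = ∂ T` shows that it equals `-ρ(D(u, v)_λ)_{λ+μ} w`. The coefficient of `λ^n μ^m` of the
latter is a unitriangular combination of the coefficients of `ρ(D(u, v)_i)_j w` (the one with
`i = n` has coefficient `1`), so the defect vanishes iff all of them do. -/

open Finset

theorem alternating_sum_choose_mul_choose_sub (j n M : ℕ) (hj : j ≤ M) :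
    ∑ i ∈ range (n + 1), (-1 : ℤ) ^ i * j.choose i * (M - i).choose (n - i)
      = (M - j).choose n := by
  induction j generalizing n M with
  | zero => simp [sum_range_succ']
  | succ j ih =>
    cases n with
    | zero => simp
    | succ n =>
      have hpascal : (M - j).choose (n + 1)
          = (M - 1 - j).choose n + (M - (j + 1)).choose (n + 1) := by
        rw [show M - j = M - (j + 1) + 1 by omega, Nat.choose_succ_succ',
          show M - 1 - j = M - (j + 1) by omega]
      have hterm : ∀ i ∈ range (n + 1),
          (-1 : ℤ) ^ (i + 1) * (j + 1).choose (i + 1) * (M - (i + 1)).choose (n + 1 - (i + 1))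
            = -((-1) ^ i * j.choose i * (M - 1 - i).choose (n - i))
              + (-1) ^ (i + 1) * j.choose (i + 1) * (M - (i + 1)).choose (n + 1 - (i + 1)) := by
        intro i _
        rw [Nat.choose_succ_succ', show M - (i + 1) = M - 1 - i by omega, Nat.add_sub_add_right]
        push_cast
        ring
      have hfirst := ih (n + 1) M (by omega)
      rw [sum_range_succ'] at hfirst ⊢
      rw [sum_congr rfl hterm, sum_add_distrib, sum_neg_distrib, ih n (M - 1) (by omega)]
      rw [hpascal] at hfirst
      simp only [Nat.choose_zero_right] at hfirst ⊢
      push_cast at hfirst ⊢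
      linarith

theorem eq_zero_of_sum_choose_smul_eq_zero {M : Type} [AddCommGroup M] [Module ℂ M]
    (Y : ℕ → ℕ → M)
    (h : ∀ n m, ∑ i ∈ range (n + 1), ((m + n - i).choose (n - i) : ℂ) • Y i (m + n - i) = 0)
    (k m : ℕ) : Y k m = 0 := by
  induction k using Nat.strong_induction_on generalizing m with
  | _ k ih =>
    have hk := h k m
    rw [sum_range_succ, sum_eq_zero fun i hi => by rw [ih i (mem_range.1 hi)]; simp] at hk
    simpa using hk

variable {A B V : Type} [AddCommGroup A] [Module ℂ A] [AddCommGroup B] [Module ℂ B]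
  [AddCommGroup V] [Module ℂ V]

theorem csubst_add (D : Module.End ℂ A) (f g : ℕ →₀ A) (k : ℕ) :
    csubst D (f + g) k = csubst D f k + csubst D g k :=
  sum_add_index' (fun _ => by simp) fun _ _ _ => by rw [map_add, smul_add]

theorem csubst_single (D : Module.End ℂ A) (j : ℕ) (a : A) (k : ℕ) :
    csubst D (single j a) k = ((-1 : ℂ) ^ j * j.choose k) • (D ^ (j - k)) a :=
  sum_single_index (by simp)

theorem LinearMap.map_csubst (φ : A →ₗ[ℂ] B) {D : Module.End ℂ A} {D' : Module.End ℂ B}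
    (h : ∀ x, φ (D x) = D' (φ x)) (f : ℕ →₀ A) (k : ℕ) :
    φ (csubst D f k) = csubst D' (f.mapRange φ φ.map_zero) k := by
  have hpow (p : ℕ) (x : A) : φ ((D ^ p) x) = (D' ^ p) (φ x) :=
    (LinearMap.congr_fun (Module.End.commute_pow_left_of_commute
      (LinearMap.ext fun x => (h x).symm) p) x).symm
  rw [csubst, csubst, sum_mapRange_index (by simp), map_finsuppSum]
  exact Finsupp.sum_congr fun n _ => by rw [map_smul, hpow]

def lsDefect (mul : V →ₗ[ℂ] V →ₗ[ℂ] (ℕ →₀ V)) (a b c : V) (n m : ℕ) : V :=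
  (comp2 mul mul a b c n m - mul a (mul b c m) n) - (comp2 mul mul b a c m n - mul b (mul a c n) m)

namespace ConfRep

variable {L : LieConfAlg A} (ρ : ConfRep L V)

theorem act_D_pow_add (p : ℕ) (a : A) (w : V) (k : ℕ) :
    ρ.act ((L.D ^ p) a) w (k + p) = (-1 : ℂ) ^ p • ρ.act a w k := by
  induction p with
  | zero => simp
  | succ p ih =>
    rw [pow_succ', Module.End.mul_apply, ← add_assoc, ρ.sesq_left, ih, pow_succ, mul_smul]
    simp

theorem act_D_pow_of_lt (p : ℕ) (a : A) (w : V) {k : ℕ} (hk : k < p) :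
    ρ.act ((L.D ^ p) a) w k = 0 := by
  induction p generalizing k with
  | zero => omega
  | succ p ih =>
    rw [pow_succ', Module.End.mul_apply]
    cases k with
    | zero => exact ρ.sesq_left_zero _ w
    | succ k => rw [ρ.sesq_left, ih (by omega), neg_zero]


theorem sum_choose_smul_act_csubst_single (j : ℕ) (a : A) (w : V) (n m : ℕ) :
    ∑ i ∈ range (n + 1),
        ((m + n - i).choose (n - i) : ℂ) • ρ.act (csubst L.D (single j a) i) w (m + n - i)
      = if j ≤ m + n then ((m + n - j).choose n : ℂ) • ρ.act a w (m + n - j) else 0 := by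
  split_ifs with hj
  · have hterm : ∀ i ∈ range (n + 1),
        ((m + n - i).choose (n - i) : ℂ) • ρ.act (csubst L.D (single j a) i) w (m + n - i)
          = ((-1 : ℂ) ^ i * j.choose i * (m + n - i).choose (n - i)) • ρ.act a w (m + n - j) := by
      intro i _
      rw [csubst_single, map_smul, LinearMap.smul_apply, Finsupp.smul_apply]
      by_cases hij : i ≤ j
      · have hsign : (-1 : ℂ) ^ j * (-1) ^ (j - i) = (-1) ^ i := by
          rw [← pow_add, show j + (j - i) = i + 2 * (j - i) by omega, pow_add, pow_mul]
          simp
        rw [show m + n - i = (m + n - j) + (j - i) by omega, act_D_pow_add, smul_smul, smul_smul,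
          show m + n - j + (j - i) = m + n - i by omega, ← hsign]
        ring_nf
      · simp [Nat.choose_eq_zero_of_lt (not_le.1 hij)]
    have hbinom := congrArg (Int.cast : ℤ → ℂ) (alternating_sum_choose_mul_choose_sub j n (m + n) hj)
    push_cast at hbinom
    rw [sum_congr rfl hterm, ← sum_smul, hbinom]
  · refine sum_eq_zero fun i hi => ?_
    have := mem_range.1 hi
    rw [csubst_single, map_smul, LinearMap.smul_apply, Finsupp.smul_apply,
      act_D_pow_of_lt _ _ _ _ (by omega), smul_zero, smul_zero]

/-- Coefficientwise, `ρ(g(-λ-∂))_{λ+μ} w = ρ(g(μ))_{λ+μ} w`: since `ρ(∂x)_ν = -ν ρ(x)_ν`,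
substituting `-λ-∂` for `μ` and then acting with parameter `λ+μ` gives back `μ`. -/
theorem sum_choose_smul_act_csubst (g : ℕ →₀ A) (w : V) (n m : ℕ) :
    ∑ i ∈ range (n + 1), ((m + n - i).choose (n - i) : ℂ) • ρ.act (csubst L.D g i) w (m + n - i)
      = ∑ i ∈ range (m + 1), ((n + m - i).choose (m - i) : ℂ) • ρ.act (g i) w (n + m - i) := by
  induction g using Finsupp.induction_linear with
  | zero => simp [csubst]
  | add f g hf hg =>
    simp only [csubst_add, map_add, LinearMap.add_apply, Finsupp.add_apply, smul_add,
      sum_add_distrib, hf, hg]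
  | single j a =>
    rw [sum_choose_smul_act_csubst_single]
    by_cases hjm : j ≤ m
    · rw [if_pos (by omega), sum_eq_single_of_mem j (mem_range.2 (by omega)) fun i _ hij => by
        rw [single_eq_of_ne hij, map_zero, LinearMap.zero_apply, Finsupp.zero_apply, smul_zero],
        single_eq_same, add_comm n m, Nat.choose_symm_of_eq_add (by omega : m + n - j = n + (m - j))]
    · rw [sum_eq_zero fun i hi => by
        rw [single_eq_of_ne (by have := mem_range.1 hi; omega), map_zero, LinearMap.zero_apply,
          Finsupp.zero_apply, smul_zero]]
      split_ifs
      · rw [Nat.choose_eq_zero_of_lt (by omega), Nat.cast_zero, zero_smul]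
      · rfl

variable (T : V →ₗ[ℂ] A)

def oOperatorDefect (u v : V) (k : ℕ) : A :=
  L.mul (T u) (T v) k - T (ρ.act (T u) v k - csubst ρ.DV (ρ.act (T v) u) k)

theorem lsDefect_comp_eq (hTD : ∀ v, T (ρ.DV v) = L.D (T v)) (u v w : V) (n m : ℕ) :
    lsDefect (ρ.act ∘ₗ T) u v w n m
      = -∑ i ∈ range (n + 1),
          ((m + n - i).choose (n - i) : ℂ) • ρ.act (ρ.oOperatorDefect T u v i) w (m + n - i) := by
  have hfirst : comp2 (ρ.act ∘ₗ T) (ρ.act ∘ₗ T) u v w n m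
      = ∑ i ∈ range (n + 1),
          ((m + n - i).choose (n - i) : ℂ) • ρ.act (T (ρ.act (T u) v i)) w (m + n - i) := rfl
  have hsecond : comp2 (ρ.act ∘ₗ T) (ρ.act ∘ₗ T) v u w m n
      = ∑ i ∈ range (n + 1), ((m + n - i).choose (n - i) : ℂ) •
          ρ.act (T (csubst ρ.DV (ρ.act (T v) u) i)) w (m + n - i) := by
    simp only [T.map_csubst hTD, ρ.sum_choose_smul_act_csubst, mapRange_apply]
    rfl
  have hrep : (ρ.act ∘ₗ T) u ((ρ.act ∘ₗ T) v w m) n - (ρ.act ∘ₗ T) v ((ρ.act ∘ₗ T) u w n) m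
      = ∑ i ∈ range (n + 1),
          ((m + n - i).choose (n - i) : ℂ) • ρ.act (L.mul (T u) (T v) i) w (m + n - i) :=
    (ρ.rep (T u) (T v) w n m).symm
  rw [lsDefect, sub_sub_sub_comm, hfirst, hsecond, hrep, ← sum_sub_distrib, ← sum_sub_distrib,
    ← sum_neg_distrib]
  refine sum_congr rfl fun i _ => ?_
  simp only [oOperatorDefect, map_sub, LinearMap.sub_apply, Finsupp.sub_apply, smul_sub, neg_sub]

def compConfAlg (hTD : ∀ v, T (ρ.DV v) = L.D (T v)) : ConfAlg V where
  D := ρ.DV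
  mul := ρ.act ∘ₗ T
  sesq_left_zero a b := by simpa [hTD] using ρ.sesq_left_zero (T a) b
  sesq_left a b n := by simpa [hTD] using ρ.sesq_left (T a) b n
  sesq_right_zero a b := ρ.sesq_right_zero (T a) b
  sesq_right a b n := ρ.sesq_right (T a) b n

end ConfRep

/-- `u *_λ v := ρ(T u)_λ v` is left-symmetric conformal iff
`[T(u)_λ T(v)] - T(ρ(T u)_λ v - ρ(T v)_{-λ-∂} u)` has all coefficients in `ker ρ`. -/
theorem left_symmetric_iff_ker {A V : Type}
    [AddCommGroup A] [Module ℂ A] [AddCommGroup V] [Module ℂ V]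
    (L : LieConfAlg A) (ρ : ConfRep L V) (T : V →ₗ[ℂ] A)
    (hTD : ∀ v, T (ρ.DV v) = L.D (T v)) :
    (∃ S : LSConfAlg V, S.D = ρ.DV ∧ ∀ u v n, S.mul u v n = ρ.act (T u) v n)
    ↔ ∀ u v k w m,
        ρ.act (L.mul (T u) (T v) k
          - T (ρ.act (T u) v k - csubst ρ.DV (ρ.act (T v) u) k)) w m = 0 := by
  constructor
  · rintro ⟨S, -, hS⟩ u v k w m
    have hmul : S.mul = ρ.act ∘ₗ T :=
      LinearMap.ext fun a => LinearMap.ext fun b => Finsupp.ext fun n => hS a b n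
    refine eq_zero_of_sum_choose_smul_eq_zero
      (fun i m => ρ.act (ρ.oOperatorDefect T u v i) w m) (fun n m => ?_) k m
    rw [← neg_eq_zero, ← ρ.lsDefect_comp_eq T hTD, ← hmul, lsDefect, S.lsym, sub_self]
  · intro h
    refine ⟨{ ρ.compConfAlg T hTD with lsym := fun a b c n m => ?_ }, rfl, fun _ _ _ => rfl⟩
    rw [← sub_eq_zero]
    change lsDefect (ρ.act ∘ₗ T) a b c n m = 0
    rw [ρ.lsDefect_comp_eq T hTD, neg_eq_zero]
    exact sum_eq_zero fun i _ => by rw [ConfRep.oOperatorDefect, h, smul_zero]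
end
end

section
/- Let R be a Lie conformal algebra with C-vector space basis given by symbols a_n (a ∈ R, n ∈ Z) of its coefficient Lie algebra Coeff(R), which has bracket a_m · b_n = Σ_{j∈N} C(m,j) (a_{(j)} b)_{m+n-j}, where a_λ b = Σ_n (λ^n/n!) a_{(n)} b. If T: R → R is a Rota-Baxter operator of weight α on R (i.e. a C[∂]-module map with [T(a)_λ T(b)] = T([a_λ T(b)]) + T([T(a)_λ b]) + α T([a_λ b])), then the linear operator 𝒯 on Coeff(R) defined by 𝒯(a_n) = T(a)_n is a Rota-Baxter operator of weight α on the Lie algebra Coeff(R), i.e. [𝒯(x), 𝒯(y)] = 𝒯([𝒯(x), y] + [x, 𝒯(y)]) + α 𝒯([x,y]). -/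
open Finsupp

noncomputable section

/-- if `T` is a Rota-Baxter operator of weight `α` on a Lie conformal
algebra `R`, then `𝒯(a_n) = T(a)_n` is a Rota-Baxter operator of weight `α` on the
coefficient Lie algebra `Coeff(R)`.  Here the coefficient Lie algebra is axiomatized
as a complex Lie algebra `g` spanned by elements `φ n a` (`a ∈ R`, `n ∈ ℤ`) with
`(∂a)_n = -n a_{n-1}` and bracket
`[a_m, b_n] = Σ_j (m(m-1)⋯(m-j+1)) (coeff_j [a_λ b])_{m+n-j}`. -/
theorem rota_baxter_coeff_algebra {A : Type} [AddCommGroup A] [Module ℂ A]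
    (Lc : LieConfAlg A) (α : ℂ)
    (g : Type) [LieRing g] [LieAlgebra ℂ g]
    (φ : ℤ → A →ₗ[ℂ] g)
    (hφD : ∀ (n : ℤ) (a : A), φ n (Lc.D a) = (-(n : ℂ)) • φ (n - 1) a)
    (hspan : ∀ x : g, x ∈ Submodule.span ℂ (⋃ n : ℤ, Set.range (φ n)))
    (hbr : ∀ (a b : A) (m n : ℤ) (N : ℕ), (∀ j, N ≤ j → Lc.mul a b j = 0) →
      ⁅φ m a, φ n b⁆
        = ∑ j ∈ Finset.range N,
            (∏ i ∈ Finset.range j, ((m : ℂ) - (i : ℂ))) • φ (m + n - j) (Lc.mul a b j))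
    (T : A →ₗ[ℂ] A) (hTD : ∀ a, T (Lc.D a) = Lc.D (T a))
    (hRB : ∀ a b k, Lc.mul (T a) (T b) k
      = T (Lc.mul a (T b) k) + T (Lc.mul (T a) b k) + α • T (Lc.mul a b k))
    (𝒯 : g →ₗ[ℂ] g) (h𝒯 : ∀ (n : ℤ) (a : A), 𝒯 (φ n a) = φ n (T a)) :
    ∀ x y : g, ⁅𝒯 x, 𝒯 y⁆ = 𝒯 ⁅𝒯 x, y⁆ + 𝒯 ⁅x, 𝒯 y⁆ + α • 𝒯 ⁅x, y⁆ := by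
  -- the key case of generators
  have key : ∀ (m n : ℤ) (a b : A),
      ⁅𝒯 (φ m a), 𝒯 (φ n b)⁆ = 𝒯 ⁅𝒯 (φ m a), φ n b⁆ + 𝒯 ⁅φ m a, 𝒯 (φ n b)⁆
        + α • 𝒯 ⁅φ m a, φ n b⁆ := by
    intro m n a b
    have hvan : ∀ f : ℕ →₀ A, ∀ j, f.support.sup id < j → f j = 0 := by
      intro f j hj
      by_contra h
      exact absurd (Finset.le_sup (f := id) (Finsupp.mem_support_iff.2 h)) (not_le.2 hj)
    set f1 := Lc.mul (T a) (T b) with hf1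
    set f2 := Lc.mul (T a) b with hf2
    set f3 := Lc.mul a (T b) with hf3
    set f4 := Lc.mul a b with hf4
    set N := f1.support.sup id + f2.support.sup id + f3.support.sup id
      + f4.support.sup id + 1 with hNdef
    have h1 : ∀ j, N ≤ j → f1 j = 0 := fun j hj => hvan f1 j (by omega)
    have h2 : ∀ j, N ≤ j → f2 j = 0 := fun j hj => hvan f2 j (by omega)
    have h3 : ∀ j, N ≤ j → f3 j = 0 := fun j hj => hvan f3 j (by omega)
    have h4 : ∀ j, N ≤ j → f4 j = 0 := fun j hj => hvan f4 j (by omega)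
    rw [h𝒯, h𝒯, hbr (T a) (T b) m n N h1, hbr (T a) b m n N h2,
      hbr a (T b) m n N h3, hbr a b m n N h4]
    simp only [map_sum, map_smul, h𝒯, ← hf1, ← hf2, ← hf3, ← hf4]
    have hterm : ∀ j, f1 j = T (f3 j) + T (f2 j) + α • T (f4 j) := fun j => hRB a b j
    rw [Finset.smul_sum]
    rw [← Finset.sum_add_distrib, ← Finset.sum_add_distrib]
    refine Finset.sum_congr rfl fun j _ => ?_
    rw [hterm j, map_add, map_add, map_smul]
    module
  intro x y
  exact Submodule.span_induction₂
    (p := fun x y _ _ => ⁅𝒯 x, 𝒯 y⁆ = 𝒯 ⁅𝒯 x, y⁆ + 𝒯 ⁅x, 𝒯 y⁆ + α • 𝒯 ⁅x, y⁆)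
    (fun x y hx hy => by
      obtain ⟨_, ⟨m, rfl⟩, ⟨a, rfl⟩⟩ := hx
      obtain ⟨_, ⟨n, rfl⟩, ⟨b, rfl⟩⟩ := hy
      exact key m n a b)
    (fun y _ => by simp)
    (fun x _ => by simp)
    (fun x y z _ _ _ hxz hyz => by
      simp only [map_add, add_lie, lie_add, smul_add] at *
      rw [hxz, hyz]; abel)
    (fun x y z _ _ _ hxy hxz => by
      simp only [map_add, add_lie, lie_add, smul_add] at *
      rw [hxy, hxz]; abel)
    (fun r x y _ _ h => by
      simp only [map_smul, smul_lie, lie_smul] at *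
      rw [h]; module)
    (fun r x y _ _ h => by
      simp only [map_smul, smul_lie, lie_smul] at *
      rw [h]; module)
    (hspan x) (hspan y)
end
end

section
/- Let R = C[∂] ⊗ V be a quadratic Lie conformal algebra with λ-bracket [a_λ b] = ∂(b∘a) + λ(a*b) + [b,a] for a, b ∈ V, where a*b = a∘b + b∘a and (V, [·,·], ∘) is a finite-dimensional Gel'fand-Dorfman bialgebra. Suppose the commutative algebra (V, *) has no zero divisors. Then every Rota-Baxter operator T of weight α on R satisfies T(V) ⊆ V, and its restriction to V is a Rota-Baxter operator of weight α both on the Lie algebra (V, [·,·]) and on the Novikov algebra (V, ∘). -/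
open Finsupp

noncomputable section

section Helpers

variable {V : Type} [AddCommGroup V] [Module ℂ V]
  (L : ConfAlg (ℕ →₀ V))
  (hD : ∀ (n : ℕ) (v : V), L.D (Finsupp.single n v) = Finsupp.single (n + 1) v)

include hD

lemma conf_left_lt (a : V) (y : ℕ →₀ V) :
    ∀ i k, k < i → L.mul (Finsupp.single i a) y k = 0 := by
  intro i
  induction i with
  | zero => intro k hk; omega
  | succ i ih =>
    intro k hk
    rw [← hD i a]
    cases k with
    | zero => exact L.sesq_left_zero _ _
    | succ n => rw [L.sesq_left, ih n (by omega), neg_zero]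

lemma conf_left_pow (a : V) (y : ℕ →₀ V) :
    ∀ i k, L.mul (Finsupp.single i a) y (k + i)
      = ((-1 : ℂ)) ^ i • L.mul (Finsupp.single 0 a) y k := by
  intro i
  induction i with
  | zero => intro k; simp
  | succ i ih =>
    intro k
    rw [← hD i a, show k + (i + 1) = (k + i) + 1 from rfl, L.sesq_left, ih,
      pow_succ, mul_comm, mul_smul, neg_one_smul]

variable (hmul2 : ∀ (a b : V) (n : ℕ),
    L.mul (Finsupp.single 0 a) (Finsupp.single 0 b) (n + 2) = 0)

include hmul2

lemma conf_right_vanish (a b : V) :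
    ∀ j k, j + 2 ≤ k → L.mul (Finsupp.single 0 a) (Finsupp.single j b) k = 0 := by
  intro j
  induction j with
  | zero =>
    intro k hk
    obtain ⟨n, rfl⟩ : ∃ n, k = n + 2 := ⟨k - 2, by omega⟩
    exact hmul2 a b n
  | succ j ih =>
    intro k hk
    obtain ⟨n, rfl⟩ : ∃ n, k = n + 1 := ⟨k - 1, by omega⟩
    rw [← hD j b, L.sesq_right, ih (n + 1) (by omega), ih n (by omega), map_zero, add_zero]

lemma conf_right_top (a b : V) :
    ∀ j, L.mul (Finsupp.single 0 a) (Finsupp.single j b) (j + 1)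
      = L.mul (Finsupp.single 0 a) (Finsupp.single 0 b) 1 := by
  intro j
  induction j with
  | zero => rfl
  | succ j ih =>
    rw [← hD j b, L.sesq_right, conf_right_vanish L hD hmul2 a b j (j + 2) le_rfl,
      map_zero, zero_add, ih]

end Helpers

/-- on a quadratic Lie conformal algebra `R = ℂ[∂]V` coming from a
finite-dimensional Gel'fand-Dorfman bialgebra whose product `a*b = a∘b + b∘a` has
no zero divisors, every Rota-Baxter operator of weight `α` preserves `V`, and its
restriction is a Rota-Baxter operator of weight `α` on both the Lie algebra and
the Novikov algebra. -/
theorem rota_baxter_quadratic_homogeneous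
    {V : Type} [LieRing V] [LieAlgebra ℂ V] [FiniteDimensional ℂ V]
    (nov : V →ₗ[ℂ] V →ₗ[ℂ] V)
    (hnov1 : ∀ a b c : V, nov (nov a b) c = nov (nov a c) b)
    (hnov2 : ∀ a b c : V,
      nov (nov a b) c - nov a (nov b c) = nov (nov b a) c - nov b (nov a c))
    (hcompat : ∀ a b c : V,
      ⁅nov a b, c⁆ + nov ⁅a, b⁆ c - nov a ⁅b, c⁆ - ⁅nov a c, b⁆ - nov ⁅a, c⁆ b = 0)
    (hnzd : ∀ a b : V, nov a b + nov b a = 0 → a = 0 ∨ b = 0)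
    (L : LieConfAlg (ℕ →₀ V))
    (hD : ∀ (n : ℕ) (v : V), L.D (Finsupp.single n v) = Finsupp.single (n + 1) v)
    (hmul0 : ∀ a b : V, L.mul (Finsupp.single 0 a) (Finsupp.single 0 b) 0
        = Finsupp.single 1 (nov b a) + Finsupp.single 0 ⁅b, a⁆)
    (hmul1 : ∀ a b : V, L.mul (Finsupp.single 0 a) (Finsupp.single 0 b) 1
        = Finsupp.single 0 (nov a b + nov b a))
    (hmul2 : ∀ (a b : V) (n : ℕ),
        L.mul (Finsupp.single 0 a) (Finsupp.single 0 b) (n + 2) = 0)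
    (α : ℂ) (T : (ℕ →₀ V) →ₗ[ℂ] (ℕ →₀ V))
    (hTD : ∀ p, T (L.D p) = L.D (T p))
    (hRB : ∀ a b k, L.mul (T a) (T b) k
      = T (L.mul a (T b) k) + T (L.mul (T a) b k) + α • T (L.mul a b k)) :
    ∃ t : V →ₗ[ℂ] V,
      (∀ v : V, T (Finsupp.single 0 v) = Finsupp.single 0 (t v)) ∧
      (∀ a b : V, ⁅t a, t b⁆ = t ⁅t a, b⁆ + t ⁅a, t b⁆ + α • t ⁅a, b⁆) ∧
      (∀ a b : V, nov (t a) (t b)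
        = t (nov (t a) b) + t (nov a (t b)) + α • t (nov a b)) := by
  classical
  set t : ℕ → V →ₗ[ℂ] V :=
    fun k => Finsupp.lapply k ∘ₗ T ∘ₗ Finsupp.lsingle 0 with ht
  have htv : ∀ (k : ℕ) (v : V), t k v = T (Finsupp.single 0 v) k := fun _ _ => rfl
  have hne_ex : ∀ k, t k ≠ 0 → ∃ v : V, t k v ≠ 0 := by
    intro k hk
    by_contra h
    push_neg at h
    exact hk (LinearMap.ext fun v => h v)
  -- uniform bound on supports
  let B := Module.finBasis ℂ V
  let S : Finset ℕ := Finset.univ.biUnion fun i => (T (Finsupp.single 0 (B i))).support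
  have hS : ∀ (v : V) (k : ℕ), k ∉ S → T (Finsupp.single 0 v) k = 0 := by
    intro v k hk
    have hv : ∑ i, B.repr v i • B i = v := B.sum_repr v
    have hexp1 : T (Finsupp.single 0 v) = ∑ i, B.repr v i • T (Finsupp.single 0 (B i)) := by
      have h2 := congrArg (T ∘ₗ Finsupp.lsingle (R := ℂ) 0) hv
      simp only [map_sum, map_smul, LinearMap.comp_apply, Finsupp.lsingle_apply] at h2
      exact h2.symm
    rw [hexp1, Finsupp.finset_sum_apply]
    refine Finset.sum_eq_zero fun i _ => ?_
    rw [Finsupp.smul_apply]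
    have hz : T (Finsupp.single 0 (B i)) k = 0 := by
      rw [← Finsupp.notMem_support_iff]
      intro hmem
      exact hk (Finset.mem_biUnion.2 ⟨i, Finset.mem_univ i, hmem⟩)
    rw [hz, smul_zero]
  -- expansion of T(single 0 v) as a sum of singles over S
  have hexp : ∀ v : V,
      T (Finsupp.single 0 v) = ∑ i ∈ S, Finsupp.single i (t i v) := by
    intro v
    ext k
    rw [Finsupp.finset_sum_apply]
    have hc : ∀ i ∈ S, Finsupp.single i (t i v) k = if i = k then t i v else 0 :=
      fun i _ => Finsupp.single_apply
    rw [Finset.sum_congr rfl hc, Finset.sum_ite_eq' S k (fun i => t i v)]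
    by_cases hk : k ∈ S
    · rw [if_pos hk, htv]
    · rw [if_neg hk, hS v k hk]
  -- key: t k = 0 for k ≥ 1
  have key : ∀ k, 1 ≤ k → t k = 0 := by
    by_contra hcon
    push_neg at hcon
    obtain ⟨k₀, hk₀1, hk₀⟩ := hcon
    have hK : (S.filter fun k => 1 ≤ k ∧ t k ≠ 0).Nonempty := by
      obtain ⟨v, hv⟩ := hne_ex k₀ hk₀
      have hmem : k₀ ∈ S := by
        by_contra hmem
        exact hv ((htv k₀ v).trans (hS v k₀ hmem))
      refine ⟨k₀, ?_⟩
      simp only [Finset.mem_filter]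
      exact ⟨hmem, hk₀1, hk₀⟩
    set N : ℕ := (S.filter fun k => 1 ≤ k ∧ t k ≠ 0).max' hK with hNdef
    have hNmem := (S.filter fun k => 1 ≤ k ∧ t k ≠ 0).max'_mem hK
    rw [← hNdef, Finset.mem_filter] at hNmem
    obtain ⟨hNS, hN1, hNne⟩ := hNmem
    have htop : ∀ k, N < k → t k = 0 := by
      intro k hk
      by_contra hne
      obtain ⟨v, hv⟩ := hne_ex k hne
      have hkS : k ∈ S := by
        by_contra hmem
        exact hv ((htv k v).trans (hS v k hmem))
      have hmem' : k ∈ S.filter fun k => 1 ≤ k ∧ t k ≠ 0 := by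
        simp only [Finset.mem_filter]
        exact ⟨hkS, by omega, hne⟩
      have := Finset.le_max' _ k hmem'
      omega
    have hprod : ∀ a b : V, nov (t N a) (t N b) + nov (t N b) (t N a) = 0 := by
      intro a b
      -- generic vanishing of coefficients
      have hterm0 : ∀ (i j : ℕ) (x y : V), i + j + 2 ≤ 2 * N + 1 →
          L.mul (Finsupp.single i x) (Finsupp.single j y) (2 * N + 1) = 0 := by
        intro i j x y hij
        have h1 : (2 * N + 1 : ℕ) = (2 * N + 1 - i) + i := by omega
        rw [h1, conf_left_pow L.toConfAlg hD,
          conf_right_vanish L.toConfAlg hD hmul2 _ _ j _ (by omega), smul_zero]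
      have hterm : ∀ i j : ℕ, i ≠ N ∨ j ≠ N →
          L.mul (Finsupp.single i (t i a)) (Finsupp.single j (t j b)) (2 * N + 1) = 0 := by
        intro i j hij
        rcases Nat.lt_or_ge N i with hi | hi
        · rw [htop i hi]
          simp
        · rcases Nat.lt_or_ge N j with hj | hj
          · rw [htop j hj]
            simp
          · exact hterm0 i j _ _ (by omega)
      have htermN : L.mul (Finsupp.single N (t N a)) (Finsupp.single N (t N b)) (2 * N + 1)
          = ((-1 : ℂ)) ^ N • Finsupp.single 0 (nov (t N a) (t N b) + nov (t N b) (t N a)) := by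
        have h1 : (2 * N + 1 : ℕ) = (N + 1) + N := by omega
        rw [h1, conf_left_pow L.toConfAlg hD, conf_right_top L.toConfAlg hD hmul2 _ _ N, hmul1]
      have hmulexp : L.mul (T (Finsupp.single 0 a)) (T (Finsupp.single 0 b)) (2 * N + 1)
          = ∑ i ∈ S, ∑ j ∈ S,
              L.mul (Finsupp.single i (t i a)) (Finsupp.single j (t j b)) (2 * N + 1) := by
        rw [hexp a, hexp b]
        simp only [map_sum, LinearMap.sum_apply, Finsupp.finset_sum_apply]
        exact Finset.sum_comm
      have e1 : L.mul (T (Finsupp.single 0 a)) (T (Finsupp.single 0 b)) (2 * N + 1)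
          = ((-1 : ℂ)) ^ N • Finsupp.single 0 (nov (t N a) (t N b) + nov (t N b) (t N a)) := by
        rw [hmulexp, Finset.sum_eq_single N
          (fun i _ hi => Finset.sum_eq_zero fun j _ => hterm i j (Or.inl hi))
          (fun hN' => absurd hNS hN'),
          Finset.sum_eq_single N
          (fun j _ hj => hterm N j (Or.inr hj))
          (fun hN' => absurd hNS hN'), htermN]
      have e2 : L.mul (Finsupp.single 0 a) (T (Finsupp.single 0 b)) (2 * N + 1) = 0 := by
        rw [hexp b]
        simp only [map_sum, Finsupp.finset_sum_apply]
        refine Finset.sum_eq_zero fun j _ => ?_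
        rcases Nat.lt_or_ge N j with hj | hj
        · rw [htop j hj]
          simp
        · exact conf_right_vanish L.toConfAlg hD hmul2 _ _ j _ (by omega)
      have e3 : L.mul (T (Finsupp.single 0 a)) (Finsupp.single 0 b) (2 * N + 1) = 0 := by
        rw [hexp a]
        simp only [map_sum, LinearMap.sum_apply, Finsupp.finset_sum_apply]
        refine Finset.sum_eq_zero fun i _ => ?_
        rcases Nat.lt_or_ge N i with hi | hi
        · rw [htop i hi]
          simp
        · have h1 : (2 * N + 1 : ℕ) = (2 * N + 1 - i) + i := by omega
          rw [h1, conf_left_pow L.toConfAlg hD]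
          obtain ⟨n, hn⟩ : ∃ n, 2 * N + 1 - i = n + 2 := ⟨2 * N + 1 - i - 2, by omega⟩
          rw [hn, hmul2, smul_zero]
      have e4 : L.mul (Finsupp.single 0 a) (Finsupp.single 0 b) (2 * N + 1) = 0 := by
        obtain ⟨n, hn⟩ : ∃ n, 2 * N + 1 = n + 2 := ⟨2 * N - 1, by omega⟩
        rw [hn, hmul2]
      have h := hRB (Finsupp.single 0 a) (Finsupp.single 0 b) (2 * N + 1)
      rw [e1, e2, e3, e4, map_zero, smul_zero, add_zero, add_zero] at h
      have hpow : ((-1 : ℂ)) ^ N ≠ 0 := pow_ne_zero _ (by norm_num)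
      exact Finsupp.single_eq_zero.1 ((smul_eq_zero.1 h).resolve_left hpow)
    obtain ⟨v, hv⟩ := hne_ex N hNne
    have hall : ∀ b : V, t N b = 0 := fun b =>
      (hnzd (t N v) (t N b) (hprod v b)).resolve_left hv
    exact hv (hall v)
  -- conclude: T preserves V
  have hT0 : ∀ v : V, T (Finsupp.single 0 v) = Finsupp.single 0 (t 0 v) := by
    intro v
    ext k
    cases k with
    | zero =>
      rw [Finsupp.single_eq_same]
      exact (htv 0 v).symm
    | succ n =>
      have h1 : T (Finsupp.single 0 v) (n + 1) = t (n + 1) v := (htv (n + 1) v).symm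
      rw [h1, key (n + 1) (by omega)]
      simp
  have hT1 : ∀ v : V, T (Finsupp.single 1 v) = Finsupp.single 1 (t 0 v) := by
    intro v
    rw [show (1 : ℕ) = 0 + 1 from rfl, ← hD 0 v, hTD, hT0, hD]
  refine ⟨t 0, hT0, ?_, ?_⟩
  all_goals {
    intro a b
    have h := hRB (Finsupp.single 0 b) (Finsupp.single 0 a) 0
    simp only [hT0] at h
    simp only [hmul0] at h
    simp only [map_add, hT0, hT1, smul_add, Finsupp.smul_single] at h
    have h1 := DFunLike.congr_fun h 1
    have h0 := DFunLike.congr_fun h 0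
    simp only [Finsupp.add_apply, Finsupp.single_eq_same,
      Finsupp.single_eq_of_ne (by norm_num : (1 : ℕ) ≠ 0),
      Finsupp.single_eq_of_ne (by norm_num : (0 : ℕ) ≠ 1),
      add_zero, zero_add] at h1 h0
    first
      | exact h0
      | exact h1
  }
end
end

section
/- Let T be a Rota-Baxter operator of weight α on a Gel'fand-Dorfman bialgebra (V, [·,·], ∘) (i.e. T is simultaneously a Rota-Baxter operator of weight α on the Lie algebra (V,[·,·]) and on the Novikov algebra (V,∘)). Then the C[∂]-linear extension T̃: C[∂]V → C[∂]V of T is a Rota-Baxter operator of weight α on the quadratic Lie conformal algebra R = C[∂]V with [a_λ b] = ∂(b∘a) + λ(a∘b + b∘a) + [b,a] for a, b ∈ V. -/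
/-!
Since `T̃` commutes with `∂`, sesquilinearity of the λ-bracket shows that the set of pairs
`(a, b)` satisfying the Rota-Baxter identity is closed under `∂` in either slot (and under
addition). As `V` generates `ℂ[∂]V` as a `ℂ[∂]`-module, it suffices to check the identity
for `a, b ∈ V`, where its `λ⁰`-coefficient is the Rota-Baxter identity for `∘` (times `∂`)
plus the one for `[·,·]`, its `λ¹`-coefficient is the one for `∘` (twice), and higher
coefficients vanish.
-/

open Finsupp

noncomputable section

namespace ConfAlg

variable {A : Type} [AddCommGroup A] [Module ℂ A]

def RotaBaxterAt (C : ConfAlg A) (T : A →ₗ[ℂ] A) (α : ℂ) (a b : A) : Prop :=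
  ∀ k, C.mul (T a) (T b) k
    = T (C.mul a (T b) k) + T (C.mul (T a) b k) + α • T (C.mul a b k)

variable {C : ConfAlg A} {T : A →ₗ[ℂ] A} {α : ℂ}

theorem rotaBaxterAt_zero_left (b : A) : C.RotaBaxterAt T α 0 b := by
  intro k; simp

theorem rotaBaxterAt_zero_right (a : A) : C.RotaBaxterAt T α a 0 := by
  intro k; simp

namespace RotaBaxterAt

variable {a a' b b' : A}

theorem add_left (h : C.RotaBaxterAt T α a b) (h' : C.RotaBaxterAt T α a' b) :
    C.RotaBaxterAt T α (a + a') b := by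
  intro k
  simp only [map_add, LinearMap.add_apply, Finsupp.add_apply, smul_add, h k, h' k]
  abel

theorem add_right (h : C.RotaBaxterAt T α a b) (h' : C.RotaBaxterAt T α a b') :
    C.RotaBaxterAt T α a (b + b') := by
  intro k
  simp only [map_add, Finsupp.add_apply, smul_add, h k, h' k]
  abel

theorem D_left (hTD : ∀ p, T (C.D p) = C.D (T p)) (h : C.RotaBaxterAt T α a b) :
    C.RotaBaxterAt T α (C.D a) b := by
  rintro (_ | k)
  · simp [hTD, C.sesq_left_zero]
  · simp only [hTD, C.sesq_left, map_neg, smul_neg, h k]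
    abel

theorem D_right (hTD : ∀ p, T (C.D p) = C.D (T p)) (h : C.RotaBaxterAt T α a b) :
    C.RotaBaxterAt T α a (C.D b) := by
  rintro (_ | k)
  · simp only [hTD, C.sesq_right_zero, h 0, map_add, map_smul]
  · simp only [hTD, C.sesq_right, h k, h (k + 1), map_add, map_smul, smul_add]
    abel

theorem D_pow_left (hTD : ∀ p, T (C.D p) = C.D (T p)) (h : C.RotaBaxterAt T α a b)
    (n : ℕ) :
    C.RotaBaxterAt T α ((C.D ^ n) a) b := by
  induction n with
  | zero => simpa using h
  | succ n ih => simpa only [pow_succ', Module.End.mul_apply] using ih.D_left hTD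

theorem D_pow_right (hTD : ∀ p, T (C.D p) = C.D (T p)) (h : C.RotaBaxterAt T α a b)
    (n : ℕ) :
    C.RotaBaxterAt T α a ((C.D ^ n) b) := by
  induction n with
  | zero => simpa using h
  | succ n ih => simpa only [pow_succ', Module.End.mul_apply] using ih.D_right hTD

end RotaBaxterAt

section

variable {V : Type} [AddCommGroup V] [Module ℂ V] {C : ConfAlg (ℕ →₀ V)}
  {T : (ℕ →₀ V) →ₗ[ℂ] (ℕ →₀ V)} {α : ℂ}

theorem single_eq_D_pow_single_zero
    (hD : ∀ (n : ℕ) (v : V), C.D (single n v) = single (n + 1) v) (n : ℕ) (v : V) :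
    single n v = (C.D ^ n) (single 0 v) := by
  induction n with
  | zero => simp
  | succ n ih => rw [pow_succ', Module.End.mul_apply, ← ih, hD]

theorem map_D_of_map_single {t : V →ₗ[ℂ] V}
    (hD : ∀ (n : ℕ) (v : V), C.D (single n v) = single (n + 1) v)
    (hT : ∀ (n : ℕ) (v : V), T (single n v) = single n (t v)) (p : ℕ →₀ V) :
    T (C.D p) = C.D (T p) := by
  induction p using Finsupp.induction_linear with
  | zero => simp
  | add f g hf hg => simp only [map_add, hf, hg]
  | single n v => rw [hD, hT, hT, hD]

theorem rotaBaxterAt_of_single_zero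
    (hD : ∀ (n : ℕ) (v : V), C.D (single n v) = single (n + 1) v)
    (hTD : ∀ p, T (C.D p) = C.D (T p))
    (h : ∀ x y : V, C.RotaBaxterAt T α (single 0 x) (single 0 y)) (a b : ℕ →₀ V) :
    C.RotaBaxterAt T α a b := by
  induction a using Finsupp.induction_linear with
  | zero => exact rotaBaxterAt_zero_left b
  | add a a' ha ha' => exact ha.add_left ha'
  | single n v =>
    induction b using Finsupp.induction_linear with
    | zero => exact rotaBaxterAt_zero_right _
    | add b b' hb hb' => exact hb.add_right hb'
    | single m w =>
      rw [single_eq_D_pow_single_zero hD n v, single_eq_D_pow_single_zero hD m w]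
      exact ((h v w).D_pow_right hTD m).D_pow_left hTD n

end

theorem rotaBaxterAt_single_zero_of_quadratic {V : Type} [LieRing V] [LieAlgebra ℂ V]
    {nov : V →ₗ[ℂ] V →ₗ[ℂ] V} {C : ConfAlg (ℕ →₀ V)}
    (hmul0 : ∀ a b : V, C.mul (single 0 a) (single 0 b) 0
        = single 1 (nov b a) + single 0 ⁅b, a⁆)
    (hmul1 : ∀ a b : V, C.mul (single 0 a) (single 0 b) 1 = single 0 (nov a b + nov b a))
    (hmul2 : ∀ (a b : V) (n : ℕ), C.mul (single 0 a) (single 0 b) (n + 2) = 0)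
    {α : ℂ} {t : V →ₗ[ℂ] V}
    (hRBlie : ∀ a b : V, ⁅t a, t b⁆ = t ⁅t a, b⁆ + t ⁅a, t b⁆ + α • t ⁅a, b⁆)
    (hRBnov : ∀ a b : V, nov (t a) (t b)
        = t (nov (t a) b) + t (nov a (t b)) + α • t (nov a b))
    {T : (ℕ →₀ V) →ₗ[ℂ] (ℕ →₀ V)} (hT : ∀ (n : ℕ) (v : V), T (single n v) = single n (t v))
    (x y : V) : C.RotaBaxterAt T α (single 0 x) (single 0 y) := by
  rintro (_ | _ | k)
  · simp only [hT, hmul0, hRBnov y x, hRBlie y x, map_add, single_add, smul_add,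
      smul_single]
    abel
  · simp only [hT, hmul1, hRBnov x y, hRBnov y x, map_add, single_add, smul_add,
      smul_single]
    abel
  · simp [hT, hmul2]

end ConfAlg

theorem rota_baxter_extension_quadratic_general
    {V : Type} [LieRing V] [LieAlgebra ℂ V]
    (nov : V →ₗ[ℂ] V →ₗ[ℂ] V)
    (L : LieConfAlg (ℕ →₀ V))
    (hD : ∀ (n : ℕ) (v : V), L.D (Finsupp.single n v) = Finsupp.single (n + 1) v)
    (hmul0 : ∀ a b : V, L.mul (Finsupp.single 0 a) (Finsupp.single 0 b) 0
        = Finsupp.single 1 (nov b a) + Finsupp.single 0 ⁅b, a⁆)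
    (hmul1 : ∀ a b : V, L.mul (Finsupp.single 0 a) (Finsupp.single 0 b) 1
        = Finsupp.single 0 (nov a b + nov b a))
    (hmul2 : ∀ (a b : V) (n : ℕ),
        L.mul (Finsupp.single 0 a) (Finsupp.single 0 b) (n + 2) = 0)
    (α : ℂ) (t : V →ₗ[ℂ] V)
    (hRBlie : ∀ a b : V, ⁅t a, t b⁆ = t ⁅t a, b⁆ + t ⁅a, t b⁆ + α • t ⁅a, b⁆)
    (hRBnov : ∀ a b : V, nov (t a) (t b)
        = t (nov (t a) b) + t (nov a (t b)) + α • t (nov a b))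
    (T : (ℕ →₀ V) →ₗ[ℂ] (ℕ →₀ V))
    (hT : ∀ (n : ℕ) (v : V), T (Finsupp.single n v) = Finsupp.single n (t v)) :
    (∀ p, T (L.D p) = L.D (T p)) ∧
      ∀ a b k, L.mul (T a) (T b) k
        = T (L.mul a (T b) k) + T (L.mul (T a) b k) + α • T (L.mul a b k) := by
  have hTD := ConfAlg.map_D_of_map_single hD hT
  exact ⟨hTD, ConfAlg.rotaBaxterAt_of_single_zero hD hTD
    (ConfAlg.rotaBaxterAt_single_zero_of_quadratic hmul0 hmul1 hmul2 hRBlie hRBnov hT)⟩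

/-- a Rota-Baxter operator of weight `α` on a Gel'fand-Dorfman
bialgebra extends `ℂ[∂]`-linearly to a Rota-Baxter operator of weight `α` on the
corresponding quadratic Lie conformal algebra `R = ℂ[∂]V`. -/
theorem rota_baxter_extension_quadratic
    {V : Type} [LieRing V] [LieAlgebra ℂ V]
    (nov : V →ₗ[ℂ] V →ₗ[ℂ] V)
    (hnov1 : ∀ a b c : V, nov (nov a b) c = nov (nov a c) b)
    (hnov2 : ∀ a b c : V,
      nov (nov a b) c - nov a (nov b c) = nov (nov b a) c - nov b (nov a c))
    (hcompat : ∀ a b c : V,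
      ⁅nov a b, c⁆ + nov ⁅a, b⁆ c - nov a ⁅b, c⁆ - ⁅nov a c, b⁆ - nov ⁅a, c⁆ b = 0)
    (L : LieConfAlg (ℕ →₀ V))
    (hD : ∀ (n : ℕ) (v : V), L.D (Finsupp.single n v) = Finsupp.single (n + 1) v)
    (hmul0 : ∀ a b : V, L.mul (Finsupp.single 0 a) (Finsupp.single 0 b) 0
        = Finsupp.single 1 (nov b a) + Finsupp.single 0 ⁅b, a⁆)
    (hmul1 : ∀ a b : V, L.mul (Finsupp.single 0 a) (Finsupp.single 0 b) 1
        = Finsupp.single 0 (nov a b + nov b a))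
    (hmul2 : ∀ (a b : V) (n : ℕ),
        L.mul (Finsupp.single 0 a) (Finsupp.single 0 b) (n + 2) = 0)
    (α : ℂ) (t : V →ₗ[ℂ] V)
    (hRBlie : ∀ a b : V, ⁅t a, t b⁆ = t ⁅t a, b⁆ + t ⁅a, t b⁆ + α • t ⁅a, b⁆)
    (hRBnov : ∀ a b : V, nov (t a) (t b)
        = t (nov (t a) b) + t (nov a (t b)) + α • t (nov a b))
    (T : (ℕ →₀ V) →ₗ[ℂ] (ℕ →₀ V))
    (hT : ∀ (n : ℕ) (v : V), T (Finsupp.single n v) = Finsupp.single n (t v)) :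
    (∀ p, T (L.D p) = L.D (T p)) ∧
      ∀ a b k, L.mul (T a) (T b) k
        = T (L.mul a (T b) k) + T (L.mul (T a) b k) + α • T (L.mul a b k) :=
  rota_baxter_extension_quadratic_general nov L hD hmul0 hmul1 hmul2 α t hRBlie hRBnov T hT
end
end

section
/- Every Rota-Baxter operator of weight 0 on the Virasoro Lie conformal algebra Vir = C[∂]L with [L_λ L] = (∂ + 2λ)L is trivial, i.e. if T: Vir → Vir is a C[∂]-module homomorphism with [T(a)_λ T(b)] = T([a_λ T(b)]) + T([T(a)_λ b]) for all a, b, then T = 0. -/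
open Finsupp

noncomputable section

/-!
A `ℂ[∂]`-linear endomorphism of `Vir = ℂ[∂]L` is multiplication by a polynomial `p(∂)`.
The `λ⁰`-coefficient of the Rota-Baxter identity at `a = b = L` already suffices: as
`(∂a)_0 b = 0` and `a_0 (∂b) = ∂(a_0 b)`, it reads
`p(0) p(∂) ∂L = p(∂)² ∂L + p(0) p(∂) ∂L`, so `p² ∂ = 0` and `p = 0`.
-/

open Polynomial

namespace ConfAlg

variable {A : Type} [AddCommGroup A] [Module ℂ A] (C : ConfAlg A)

lemma mul_aeval_left_zero (q : ℂ[X]) (a b : A) :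
    C.mul (aeval C.D q a) b 0 = q.eval 0 • C.mul a b 0 := by
  induction q using Polynomial.induction_on' with
  | add p q hp hq =>
    simp only [map_add, LinearMap.add_apply, Finsupp.add_apply, hp, hq, eval_add, add_smul]
  | monomial n c =>
    cases n with
    | zero => simp
    | succ n =>
      simp [aeval_monomial, pow_succ', C.sesq_left_zero]

lemma mul_pow_D_right_zero (n : ℕ) (a b : A) :
    C.mul a ((C.D ^ n) b) 0 = (C.D ^ n) (C.mul a b 0) := by
  induction n with
  | zero => simp
  | succ n ih => rw [pow_succ', Module.End.mul_apply, Module.End.mul_apply, C.sesq_right_zero, ih]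

lemma mul_aeval_right_zero (q : ℂ[X]) (a b : A) :
    C.mul a (aeval C.D q b) 0 = aeval C.D q (C.mul a b 0) := by
  induction q using Polynomial.induction_on' with
  | add p q hp hq => simp only [map_add, LinearMap.add_apply, Finsupp.add_apply, hp, hq]
  | monomial n c =>
    simp [aeval_monomial, C.mul_pow_D_right_zero]

end ConfAlg

lemma Module.End.apply_aeval_of_commute {R M : Type*} [CommSemiring R] [AddCommMonoid M]
    [Module R M] {T D : Module.End R M} (h : Commute T D) (q : R[X]) (x : M) :
    T (aeval D q x) = aeval D q (T x) := by
  have hq : Commute T (aeval D q) :=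
    Algebra.commute_of_mem_adjoin_singleton_of_commute (R := R)
      (by rw [Algebra.adjoin_singleton_eq_range_aeval]; exact ⟨q, rfl⟩) h
  exact congrArg (· x) hq.eq

section Shift

variable {R : Type*} [CommSemiring R] {D : Module.End R (ℕ →₀ R)}
  (hD : ∀ (n : ℕ) (c : R), D (single n c) = single (n + 1) c)
include hD

lemma aeval_shift_monomial (n : ℕ) (c : R) :
    aeval D (monomial n c) (single 0 1) = single n c := by
  have hpow : ∀ n : ℕ, (D ^ n) (single 0 1) = single n (1 : R) := by
    intro n
    induction n with
    | zero => rfl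
    | succ n ih => rw [pow_succ', Module.End.mul_apply, ih, hD]
  simp [aeval_monomial, hpow]

lemma aeval_shift_apply (q : R[X]) (n : ℕ) :
    aeval D q (single 0 1) n = q.coeff n := by
  induction q using Polynomial.induction_on' with
  | add p q hp hq => simp only [map_add, LinearMap.add_apply, Finsupp.add_apply, hp, hq, coeff_add]
  | monomial k c => rw [aeval_shift_monomial hD, single_apply, coeff_monomial]

lemma aeval_shift_injective : Function.Injective fun q : R[X] ↦ aeval D q (single 0 1) :=
  fun p q h ↦ Polynomial.ext fun n ↦ by
    rw [← aeval_shift_apply hD, ← aeval_shift_apply hD]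
    exact DFunLike.congr_fun h n

lemma exists_aeval_shift_eq (a : ℕ →₀ R) : ∃ q : R[X], aeval D q (single 0 1) = a := by
  induction a using Finsupp.induction_linear with
  | zero => exact ⟨0, by simp⟩
  | add a b ha hb =>
    obtain ⟨p, rfl⟩ := ha
    obtain ⟨q, rfl⟩ := hb
    exact ⟨p + q, by simp⟩
  | single n c => exact ⟨monomial n c, aeval_shift_monomial hD n c⟩

lemma exists_eq_aeval_of_commute_shift {T : Module.End R (ℕ →₀ R)} (hT : Commute T D) :
    ∃ p : R[X], T = aeval D p := by
  obtain ⟨p, hp⟩ := exists_aeval_shift_eq hD (T (single 0 1))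
  refine ⟨p, LinearMap.ext fun a ↦ ?_⟩
  obtain ⟨q, rfl⟩ := exists_aeval_shift_eq hD a
  rw [Module.End.apply_aeval_of_commute hT, ← hp, ← Module.End.mul_apply, ← map_mul, mul_comm,
    map_mul, Module.End.mul_apply]

end Shift

theorem virasoro_rota_baxter_trivial_general
    (L : LieConfAlg (ℕ →₀ ℂ))
    (hD : ∀ (n : ℕ) (c : ℂ), L.D (Finsupp.single n c) = Finsupp.single (n + 1) c)
    (hmul0 : L.mul (Finsupp.single 0 1) (Finsupp.single 0 1) 0
        = Finsupp.single 1 (1 : ℂ))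
    (T : (ℕ →₀ ℂ) →ₗ[ℂ] (ℕ →₀ ℂ))
    (hTD : ∀ p, T (L.D p) = L.D (T p))
    (hRB : ∀ a b k, L.mul (T a) (T b) k
      = T (L.mul a (T b) k) + T (L.mul (T a) b k)) :
    T = 0 := by
  obtain ⟨p, rfl⟩ := exists_eq_aeval_of_commute_shift hD (LinearMap.ext hTD)
  have hsq : aeval L.D (p * p * X) (single 0 1) = 0 := by
    have h := hRB (single 0 1) (single 0 1) 0
    rw [ConfAlg.mul_aeval_left_zero, ConfAlg.mul_aeval_left_zero,
      ConfAlg.mul_aeval_right_zero, map_smul, right_eq_add, hmul0, ← hD] at h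
    rwa [map_mul, map_mul, aeval_X, Module.End.mul_apply, Module.End.mul_apply]
  have hp : p * p * X = 0 := aeval_shift_injective hD (by simpa using hsq)
  obtain rfl : p = 0 := by simpa [X_ne_zero] using hp
  exact map_zero _

/-- every Rota-Baxter operator of weight `0` on the Virasoro Lie
conformal algebra `Vir = ℂ[∂]L` (modelled as `ℕ →₀ ℂ` with `L = single 0 1` and
`[L_λ L] = (∂ + 2λ)L`) is trivial. -/
theorem virasoro_rota_baxter_trivial
    (L : LieConfAlg (ℕ →₀ ℂ))
    (hD : ∀ (n : ℕ) (c : ℂ), L.D (Finsupp.single n c) = Finsupp.single (n + 1) c)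
    (hmul0 : L.mul (Finsupp.single 0 1) (Finsupp.single 0 1) 0
        = Finsupp.single 1 (1 : ℂ))
    (hmul1 : L.mul (Finsupp.single 0 1) (Finsupp.single 0 1) 1
        = Finsupp.single 0 (2 : ℂ))
    (hmul2 : ∀ n : ℕ, L.mul (Finsupp.single 0 1) (Finsupp.single 0 1) (n + 2) = 0)
    (T : (ℕ →₀ ℂ) →ₗ[ℂ] (ℕ →₀ ℂ))
    (hTD : ∀ p, T (L.D p) = L.D (T p))
    (hRB : ∀ a b k, L.mul (T a) (T b) k
      = T (L.mul a (T b) k) + T (L.mul (T a) b k)) :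
    T = 0 :=
  virasoro_rota_baxter_trivial_general L hD hmul0 T hTD hRB
end
end

section
/- Let R = C[∂]L ⊕ C[∂]W be the Heisenberg-Virasoro Lie conformal algebra and g(∂) ∈ C[∂]. Then the λ-products L_λ L = g(-λ)λW and L_λ W = W_λ L = W_λ W = 0 (extended by conformal sesquilinearity) define a left-symmetric conformal algebra structure on R. -/
open Finsupp

noncomputable section

/-- The carrier `ℂ[∂]L ⊕ ℂ[∂]W`, modelled as `ℕ →₀ (ℂ × ℂ)`. -/
abbrev HV : Type := ℕ →₀ (ℂ × ℂ)

/-- The generator `L`. -/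
def HVL : HV := Finsupp.single 0 ((1 : ℂ), (0 : ℂ))

/-- The generator `W`. -/
def HVW : HV := Finsupp.single 0 ((0 : ℂ), (1 : ℂ))

/-! All λ-products take values in `ℂ[∂]W`, and every product with a factor in `ℂ[∂]W` vanishes,
so both sides of the left-symmetry identity are zero and only sesquilinearity has to be checked.
Writing `a = p(∂)L + ⋯` and `b = r(∂)L + ⋯`, the product is `a_λ b = p(-λ) r(∂+λ) (λ g(-λ) W)`,
which is sesquilinear because `∂` becomes `-λ` in the left factor and `∂+λ` in the right one. -/

open Polynomial

def ConfAlg.toLSConfAlgOfMulMulEqZero {A : Type} [AddCommGroup A] [Module ℂ A] (S : ConfAlg A)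
    (mul_mul_left : ∀ a b c i, S.mul (S.mul a b i) c = 0)
    (mul_mul_right : ∀ a b c i, S.mul a (S.mul b c i) = 0) : LSConfAlg A where
  toConfAlg := S
  lsym a b c n m := by simp [comp2, mul_mul_left, mul_mul_right]

namespace HeisenbergVirasoro

section Shift

variable (M : Type*) [AddCommGroup M] [Module ℂ M]

/-- Multiplication by the variable on `M`-valued polynomials `ℕ →₀ M`: it is `∂` on `HV` and
`λ` on λ-expansions. -/
def shift : Module.End ℂ (ℕ →₀ M) := lmapDomain M ℂ Nat.succ

variable {M}

@[simp]
lemma shift_single (n : ℕ) (m : M) : shift M (single n m) = single (n + 1) m := by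
  simp [shift, mapDomain_single]

@[simp]
lemma shift_apply_zero (f : ℕ →₀ M) : shift M f 0 = 0 :=
  mapDomain_of_notMem_range _ _ (by simp)

@[simp]
lemma shift_apply_succ (f : ℕ →₀ M) (n : ℕ) : shift M f (n + 1) = f n :=
  mapDomain_apply Nat.succ_injective f n

lemma shift_mapRange {N : Type*} [AddCommGroup N] [Module ℂ N] (φ : M →ₗ[ℂ] N) (f : ℕ →₀ M) :
    shift N (mapRange.linearMap φ f) = mapRange.linearMap φ (shift M f) := by
  simp [shift, mapDomain_mapRange]

lemma neg_shift_pow_single_zero (n : ℕ) (m : M) :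
    ((-shift M) ^ n) (single 0 m) = (-1 : ℂ) ^ n • single n m := by
  induction n with
  | zero => simp
  | succ n ih => rw [pow_succ', Module.End.mul_apply, ih]; simp [pow_succ']

lemma aeval_neg_shift_single_zero_apply (p : ℂ[X]) (m : M) (k : ℕ) :
    aeval (-shift M) p (single 0 m) k = ((-1) ^ k * p.coeff k) • m := by
  rw [aeval_eq_sum_range' (n := p.natDegree + k + 1) (by omega)]
  simp [neg_shift_pow_single_zero, single_apply, smul_smul, mul_comm]

end Shift

section LamBracket

variable {M : Type*} [AddCommGroup M] [Module ℂ M] (D : Module.End ℂ M) (w : M) (g : ℂ[X])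

/-- `(p(∂)L)_λ (r(∂)L) = p(-λ) r(∂+λ) (λ g(-λ) w)` on λ-expansions `ℕ →₀ M`, where `λ` acts
as `shift M` and `∂` coefficientwise as `D`. -/
def lamBracket : ℂ[X] →ₗ[ℂ] ℂ[X] →ₗ[ℂ] (ℕ →₀ M) :=
  LinearMap.mk₂ ℂ
    (fun p r => shift M (aeval (-shift M) (p * g)
      (aeval (mapRange.linearMap (α := ℕ) D + shift M) r (single 0 w))))
    (by intros; simp [add_mul])
    (by intros; simp)
    (by intros; simp)
    (by intros; simp)

lemma lamBracket_apply (p r : ℂ[X]) :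
    lamBracket D w g p r = shift M (aeval (-shift M) (p * g)
      (aeval (mapRange.linearMap (α := ℕ) D + shift M) r (single 0 w))) :=
  rfl

lemma lamBracket_X_mul_left (p r : ℂ[X]) :
    lamBracket D w g (X * p) r = -shift M (lamBracket D w g p r) := by
  simp [lamBracket_apply, mul_assoc]

lemma lamBracket_X_mul_right (p r : ℂ[X]) :
    lamBracket D w g p (X * r) =
      (mapRange.linearMap (α := ℕ) D + shift M) (lamBracket D w g p r) := by
  have hshift : Commute (mapRange.linearMap (α := ℕ) D + shift M) (shift M) :=
    Commute.add_left (LinearMap.ext fun f => (shift_mapRange D f).symm) (Commute.refl _)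
  have haeval : Commute (mapRange.linearMap (α := ℕ) D + shift M) (aeval (-shift M) (p * g)) :=
    Algebra.commute_of_mem_adjoin_singleton_of_commute (aeval_mem_adjoin_singleton ℂ _)
      hshift.neg_right
  rw [lamBracket_apply, lamBracket_apply, map_mul (aeval _) X r, aeval_X]
  exact LinearMap.congr_fun (hshift.mul_right haeval).eq.symm _

lemma lamBracket_one_one :
    lamBracket D w g 1 1 = shift M (aeval (-shift M) g (single 0 w)) := by
  simp [lamBracket_apply]

lemma lamBracket_apply_mem {N : Submodule ℂ M} (hw : w ∈ N) (hD : ∀ m ∈ N, D m ∈ N)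
    (p r : ℂ[X]) (k : ℕ) : lamBracket D w g p r k ∈ N := by
  let P : Submodule ℂ (ℕ →₀ M) := Finsupp.submodule fun _ => N
  have hshift : P ≤ P.comap (shift M) := fun f hf n => by
    cases n <;> simp [hf _]
  have hneg : P ≤ P.comap (-shift M) := fun f hf => P.neg_mem (hshift hf)
  have hsum : P ≤ P.comap (mapRange.linearMap (α := ℕ) D + shift M) := fun f hf =>
    P.add_mem (fun n => hD _ (hf n)) (hshift hf)
  have hw0 : single 0 w ∈ P := fun n => by
    rcases eq_or_ne n 0 with rfl | hn <;> simp [*]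
  exact hshift (aeval_apply_smul_mem_of_le_comap
    (aeval_apply_smul_mem_of_le_comap hw0 r _ hsum) _ _ hneg) k

end LamBracket

/-- The coefficient `p` of `L` in `p(∂)L + r(∂)W`. -/
def lcoeff : HV →ₗ[ℂ] ℂ[X] := lsum ℂ fun n => (monomial n).comp (LinearMap.fst ℂ ℂ ℂ)

lemma lcoeff_single (n : ℕ) (v : ℂ × ℂ) : lcoeff (single n v) = monomial n v.1 := by
  simp [lcoeff]

lemma lcoeff_shift (a : HV) : lcoeff (shift _ a) = X * lcoeff a := by
  induction a using Finsupp.induction_linear with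
  | zero => simp
  | add a b ha hb => simp only [map_add, ha, hb, mul_add]
  | single n v => simp [lcoeff_single, X_mul_monomial]

lemma lcoeff_HVL : lcoeff HVL = 1 := by simp [HVL, lcoeff_single]

lemma lcoeff_HVW : lcoeff HVW = 0 := by simp [HVW, lcoeff_single]

variable (g : ℂ[X])

def hvProd : HV →ₗ[ℂ] HV →ₗ[ℂ] (ℕ →₀ HV) :=
  (lamBracket (shift _) HVW g).compl₁₂ lcoeff lcoeff

lemma hvProd_apply (a b : HV) : hvProd g a b = lamBracket (shift _) HVW g (lcoeff a) (lcoeff b) :=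
  rfl

lemma lcoeff_hvProd_apply (a b : HV) (k : ℕ) : lcoeff (hvProd g a b k) = 0 :=
  lamBracket_apply_mem (N := LinearMap.ker lcoeff) _ _ _ lcoeff_HVW
    (fun m (hm : lcoeff m = 0) => show lcoeff (shift _ m) = 0 by rw [lcoeff_shift, hm, mul_zero])
    _ _ k

lemma hvProd_eq_zero_of_lcoeff_left {a : HV} (ha : lcoeff a = 0) (b : HV) : hvProd g a b = 0 := by
  simp [hvProd_apply, ha]

lemma hvProd_eq_zero_of_lcoeff_right (a : HV) {b : HV} (hb : lcoeff b = 0) :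
    hvProd g a b = 0 := by
  simp [hvProd_apply, hb]

lemma hvProd_HVL_HVL : hvProd g HVL HVL = shift _ (aeval (-shift _) g (single 0 HVW)) := by
  rw [hvProd_apply, lcoeff_HVL, lamBracket_one_one]

lemma hvProd_HVL_HVL_apply_succ (k : ℕ) :
    hvProd g HVL HVL (k + 1) = ((-1) ^ k * g.coeff k) • HVW := by
  rw [hvProd_HVL_HVL, shift_apply_succ, aeval_neg_shift_single_zero_apply]

def confAlg : ConfAlg HV where
  D := shift _
  mul := hvProd g
  sesq_left_zero a b := by simp [hvProd_apply, lcoeff_shift, lamBracket_X_mul_left]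
  sesq_left a b n := by simp [hvProd_apply, lcoeff_shift, lamBracket_X_mul_left]
  sesq_right_zero a b := by simp [hvProd_apply, lcoeff_shift, lamBracket_X_mul_right]
  sesq_right a b n := by simp [hvProd_apply, lcoeff_shift, lamBracket_X_mul_right]

end HeisenbergVirasoro

open HeisenbergVirasoro

/-- for any `g(∂) ∈ ℂ[∂]`, the products `L_λ L = g(-λ)λ W` and
`L_λ W = W_λ L = W_λ W = 0` define a left-symmetric conformal algebra structure
on `ℂ[∂]L ⊕ ℂ[∂]W`. -/
theorem heisenberg_virasoro_left_symmetric_two (g : Polynomial ℂ) :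
    ∃ S : LSConfAlg HV,
      (∀ (n : ℕ) (v : ℂ × ℂ), S.D (Finsupp.single n v) = Finsupp.single (n + 1) v) ∧
      (S.mul HVL HVL 0 = 0) ∧
      (∀ k : ℕ, S.mul HVL HVL (k + 1)
          = Finsupp.single 0 ((0 : ℂ), (-1 : ℂ) ^ k * g.coeff k)) ∧
      (∀ k : ℕ, S.mul HVL HVW k = 0) ∧
      (∀ k : ℕ, S.mul HVW HVL k = 0) ∧
      (∀ k : ℕ, S.mul HVW HVW k = 0) := by
  refine ⟨(confAlg g).toLSConfAlgOfMulMulEqZero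
      (fun a b c i => hvProd_eq_zero_of_lcoeff_left g (lcoeff_hvProd_apply g a b i) c)
      (fun a b c i => hvProd_eq_zero_of_lcoeff_right g a (lcoeff_hvProd_apply g b c i)),
    shift_single, ?_, fun k => ?_, fun k => ?_, fun k => ?_, fun k => ?_⟩
  · exact (congrArg (· 0) (hvProd_HVL_HVL g)).trans (shift_apply_zero _)
  · exact (hvProd_HVL_HVL_apply_succ g k).trans (by simp [HVW])
  · exact congrArg (· k) (hvProd_eq_zero_of_lcoeff_right g HVL lcoeff_HVW)
  · exact congrArg (· k) (hvProd_eq_zero_of_lcoeff_left g lcoeff_HVW HVL)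
  · exact congrArg (· k) (hvProd_eq_zero_of_lcoeff_left g lcoeff_HVW HVW)
end
end
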